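/- arXiv:2308.15447 — 3 statements merged into one kernel-verified Lean document; each statement's English description precedes it below -/
import Mathlib

section
/- Let D ⊂ ℝ² be the open disk of radius R > 0 centered at the origin, let ω₀ ∈ ℝ, and let u_sb(x) := (ω₀/2)(−x₂, x₁) be the solid-body rotation with vorticity ω₀. Let ν > 0 and let u : [0,∞) × D̄ → ℝ² and p : [0,∞) × D̄ → ℝ be smooth, satisfying the incompressible Navier–Stokes equations ∂_t u + (u·∇)u = −∇p + νΔu and div u = 0 in D, with boundary condition u(t,x) = u_sb(x) for all x ∈ ∂D and t ≥ 0 (equivalently u·n̂ = 0 and u·τ̂ = ω₀R/2 on ∂D). Then for every t ≥ 0, ‖u(t,·) − u_sb‖_{L²(D)} ≤ ‖u(0,·) − u_sb‖_{L²(D)} · exp(−λ₁ ν t), where λ₁ is the first Dirichlet eigenvalue of −Δ on D. -/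
open MeasureTheory Set

/-- First spatial partial derivative of a scalar function on `ℝ × ℝ`. -/
noncomputable def pd1 (f : ℝ × ℝ → ℝ) (x : ℝ × ℝ) : ℝ := deriv (fun a => f (a, x.2)) x.1

/-- Second spatial partial derivative of a scalar function on `ℝ × ℝ`. -/
noncomputable def pd2 (f : ℝ × ℝ → ℝ) (x : ℝ × ℝ) : ℝ := deriv (fun a => f (x.1, a)) x.2

/-- Laplacian of a scalar function on `ℝ × ℝ`. -/
noncomputable def lap (f : ℝ × ℝ → ℝ) (x : ℝ × ℝ) : ℝ := pd1 (pd1 f) x + pd2 (pd2 f) x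

namespace AoT

lemma diff_slice1 {f : ℝ × ℝ → ℝ} (hf : Differentiable ℝ f) (b : ℝ) :
    Differentiable ℝ (fun a : ℝ => f (a, b)) :=
  hf.comp (differentiable_id.prodMk (differentiable_const _))

lemma diff_slice2 {f : ℝ × ℝ → ℝ} (hf : Differentiable ℝ f) (b : ℝ) :
    Differentiable ℝ (fun a : ℝ => f (b, a)) :=
  hf.comp ((differentiable_const _).prodMk differentiable_id)

lemma hasDerivAt_pd1 {f : ℝ × ℝ → ℝ} (hf : Differentiable ℝ f) (x : ℝ × ℝ) :
    HasDerivAt (fun a => f (a, x.2)) (pd1 f x) x.1 :=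
  (diff_slice1 hf x.2 x.1).hasDerivAt

lemma hasDerivAt_pd2 {f : ℝ × ℝ → ℝ} (hf : Differentiable ℝ f) (x : ℝ × ℝ) :
    HasDerivAt (fun a => f (x.1, a)) (pd2 f x) x.2 :=
  (diff_slice2 hf x.1 x.2).hasDerivAt

lemma pd1_eq_fderiv {f : ℝ × ℝ → ℝ} (hf : Differentiable ℝ f) (x : ℝ × ℝ) :
    pd1 f x = fderiv ℝ f x (1, 0) := by
  have h1 : HasDerivAt (fun a : ℝ => (a, x.2)) ((1:ℝ), (0:ℝ)) x.1 :=
    HasDerivAt.prodMk (hasDerivAt_id x.1) (hasDerivAt_const _ _)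
  have h2 := (hf (x.1, x.2)).hasFDerivAt.comp_hasDerivAt x.1 h1
  have h3 : HasDerivAt (fun a => f (a, x.2)) (fderiv ℝ f x (1, 0)) x.1 := h2
  exact ((hasDerivAt_pd1 hf x).unique h3)

lemma pd2_eq_fderiv {f : ℝ × ℝ → ℝ} (hf : Differentiable ℝ f) (x : ℝ × ℝ) :
    pd2 f x = fderiv ℝ f x (0, 1) := by
  have h1 : HasDerivAt (fun a : ℝ => (x.1, a)) ((0:ℝ), (1:ℝ)) x.2 :=
    HasDerivAt.prodMk (hasDerivAt_const _ _) (hasDerivAt_id x.2)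
  have h2 := (hf (x.1, x.2)).hasFDerivAt.comp_hasDerivAt x.2 h1
  have h3 : HasDerivAt (fun a => f (x.1, a)) (fderiv ℝ f x (0, 1)) x.2 := h2
  exact ((hasDerivAt_pd2 hf x).unique h3)

lemma contDiff_pd1 {f : ℝ × ℝ → ℝ} (hf : ContDiff ℝ (⊤ : ℕ∞) f) : ContDiff ℝ (⊤ : ℕ∞) (pd1 f) := by
  have h : pd1 f = fun x => fderiv ℝ f x (1, 0) :=
    funext fun x => pd1_eq_fderiv (hf.differentiable (by simp)) x
  rw [h]
  exact (hf.fderiv_right (le_of_eq rfl)).clm_apply contDiff_const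

lemma contDiff_pd2 {f : ℝ × ℝ → ℝ} (hf : ContDiff ℝ (⊤ : ℕ∞) f) : ContDiff ℝ (⊤ : ℕ∞) (pd2 f) := by
  have h : pd2 f = fun x => fderiv ℝ f x (0, 1) :=
    funext fun x => pd2_eq_fderiv (hf.differentiable (by simp)) x
  rw [h]
  exact (hf.fderiv_right (le_of_eq rfl)).clm_apply contDiff_const

lemma continuous_pd1 {f : ℝ × ℝ → ℝ} (hf : ContDiff ℝ (⊤ : ℕ∞) f) : Continuous (pd1 f) :=
  (contDiff_pd1 hf).continuous

-- arithmetic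
lemma pd1_add {f g : ℝ × ℝ → ℝ} (hf : Differentiable ℝ f) (hg : Differentiable ℝ g) (x : ℝ × ℝ) :
    pd1 (fun y => f y + g y) x = pd1 f x + pd1 g x :=
  ((hasDerivAt_pd1 hf x).add (hasDerivAt_pd1 hg x)).deriv

lemma pd1_mul {f g : ℝ × ℝ → ℝ} (hf : Differentiable ℝ f) (hg : Differentiable ℝ g) (x : ℝ × ℝ) :
    pd1 (fun y => f y * g y) x = pd1 f x * g x + f x * pd1 g x :=
  ((hasDerivAt_pd1 hf x).mul (hasDerivAt_pd1 hg x)).deriv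

lemma pd2_mul {f g : ℝ × ℝ → ℝ} (hf : Differentiable ℝ f) (hg : Differentiable ℝ g) (x : ℝ × ℝ) :
    pd2 (fun y => f y * g y) x = pd2 f x * g x + f x * pd2 g x :=
  ((hasDerivAt_pd2 hf x).mul (hasDerivAt_pd2 hg x)).deriv


variable {R : ℝ}

lemma measurableSet_D (R : ℝ) : MeasurableSet {x : ℝ × ℝ | x.1 ^ 2 + x.2 ^ 2 < R ^ 2} := by
  have : IsOpen {x : ℝ × ℝ | x.1 ^ 2 + x.2 ^ 2 < R ^ 2} :=
    isOpen_lt (by fun_prop) continuous_const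
  exact this.measurableSet

lemma D_subset_ball (hR : 0 < R) :
    {x : ℝ × ℝ | x.1 ^ 2 + x.2 ^ 2 < R ^ 2} ⊆ Metric.closedBall (0 : ℝ × ℝ) R := by
  intro x hx
  simp only [mem_setOf_eq] at hx
  simp only [Metric.mem_closedBall, dist_zero_right, Prod.norm_def, Real.norm_eq_abs]
  have h1 : |x.1| ≤ R := by
    rw [abs_le]; constructor <;> nlinarith [sq_nonneg x.1, sq_nonneg x.2]
  have h2 : |x.2| ≤ R := by
    rw [abs_le]; constructor <;> nlinarith [sq_nonneg x.1, sq_nonneg x.2]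
  exact max_le h1 h2

lemma integrableOn_D (hR : 0 < R) {g : ℝ × ℝ → ℝ} (hg : Continuous g) :
    IntegrableOn g {x : ℝ × ℝ | x.1 ^ 2 + x.2 ^ 2 < R ^ 2} volume :=
  ((hg.continuousOn).integrableOn_compact (isCompact_closedBall _ _)).mono_set
    (D_subset_ball hR)

lemma integral_pd1_zero (hR : 0 < R) {f : ℝ × ℝ → ℝ} (hf : ContDiff ℝ (⊤ : ℕ∞) f)
    (hpd : Continuous (pd1 f))
    (hb : ∀ x : ℝ × ℝ, x.1 ^ 2 + x.2 ^ 2 = R ^ 2 → f x = 0) :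
    ∫ x in {x : ℝ × ℝ | x.1 ^ 2 + x.2 ^ 2 < R ^ 2}, pd1 f x = 0 := by
  set D := {x : ℝ × ℝ | x.1 ^ 2 + x.2 ^ 2 < R ^ 2} with hDdef
  have hDm : MeasurableSet D := measurableSet_D R
  have hdiff : Differentiable ℝ f := hf.differentiable (by simp)
  have hInt : Integrable (D.indicator (pd1 f)) volume :=
    (integrable_indicator_iff hDm).2 (integrableOn_D hR hpd)
  rw [← integral_indicator hDm]
  rw [show (volume : Measure (ℝ × ℝ)) = (volume : Measure ℝ).prod volume from
    Measure.volume_eq_prod ℝ ℝ] at hInt ⊢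
  rw [MeasureTheory.integral_prod_symm _ hInt]
  have hinner : ∀ b : ℝ, (∫ a : ℝ, D.indicator (pd1 f) (a, b)) = 0 := by
    intro b
    by_cases hcase : b ^ 2 < R ^ 2
    · set s := Real.sqrt (R ^ 2 - b ^ 2) with hs
      have hs2 : s ^ 2 = R ^ 2 - b ^ 2 := Real.sq_sqrt (by linarith)
      have hspos : 0 < s := Real.sqrt_pos.2 (by linarith)
      have hmem : ∀ a : ℝ, ((a, b) ∈ D) ↔ a ∈ Ioo (-s) s := by
        intro a
        simp only [hDdef, mem_setOf_eq, mem_Ioo]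
        constructor
        · intro h
          have ha2 : a ^ 2 < s ^ 2 := by nlinarith
          have habs : |a| < s := by
            nlinarith [sq_abs a, abs_nonneg a]
          exact abs_lt.1 habs
        · rintro ⟨h1, h2⟩; nlinarith
      have hind : ∀ a : ℝ, D.indicator (pd1 f) (a, b)
          = (Ioo (-s) s).indicator (fun a => pd1 f (a, b)) a := by
        intro a
        by_cases hmem' : (a, b) ∈ D
        · rw [indicator_of_mem hmem', indicator_of_mem ((hmem a).1 hmem')]
        · rw [indicator_of_notMem hmem',
            indicator_of_notMem (fun hc => hmem' ((hmem a).2 hc))]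
      calc (∫ a : ℝ, D.indicator (pd1 f) (a, b))
          = ∫ a : ℝ, (Ioo (-s) s).indicator (fun a => pd1 f (a, b)) a := by
            exact integral_congr_ae (Filter.Eventually.of_forall hind)
        _ = ∫ a in Ioo (-s) s, pd1 f (a, b) := integral_indicator measurableSet_Ioo
        _ = ∫ a in Ioc (-s) s, pd1 f (a, b) := (integral_Ioc_eq_integral_Ioo).symm
        _ = ∫ a in (-s)..s, pd1 f (a, b) :=
            (intervalIntegral.integral_of_le (by linarith)).symm
        _ = f (s, b) - f (-s, b) := by
            apply intervalIntegral.integral_eq_sub_of_hasDerivAt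
              (f := fun a => f (a, b)) (f' := fun a => pd1 f (a, b))
            · intro a _
              exact hasDerivAt_pd1 hdiff (a, b)
            · exact (hpd.comp (by fun_prop)).intervalIntegrable _ _
        _ = 0 := by
            rw [hb (s, b) (by simp; nlinarith), hb (-s, b) (by simp; nlinarith)]
            ring
    · have hempty : ∀ a : ℝ, (a, b) ∉ D := by
        intro a ha
        simp only [hDdef, mem_setOf_eq] at ha
        nlinarith [sq_nonneg a]
      simp only [fun a => indicator_of_notMem (hempty a) (pd1 f)]
      exact integral_zero ℝ ℝ
  simp only [hinner, integral_zero]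

lemma integral_pd2_zero (hR : 0 < R) {f : ℝ × ℝ → ℝ} (hf : ContDiff ℝ (⊤ : ℕ∞) f)
    (hpd : Continuous (pd2 f))
    (hb : ∀ x : ℝ × ℝ, x.1 ^ 2 + x.2 ^ 2 = R ^ 2 → f x = 0) :
    ∫ x in {x : ℝ × ℝ | x.1 ^ 2 + x.2 ^ 2 < R ^ 2}, pd2 f x = 0 := by
  set D := {x : ℝ × ℝ | x.1 ^ 2 + x.2 ^ 2 < R ^ 2} with hDdef
  have hDm : MeasurableSet D := measurableSet_D R
  have hdiff : Differentiable ℝ f := hf.differentiable (by simp)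
  have hInt : Integrable (D.indicator (pd2 f)) volume :=
    (integrable_indicator_iff hDm).2 (integrableOn_D hR hpd)
  rw [← integral_indicator hDm]
  rw [show (volume : Measure (ℝ × ℝ)) = (volume : Measure ℝ).prod volume from
    Measure.volume_eq_prod ℝ ℝ] at hInt ⊢
  rw [MeasureTheory.integral_prod _ hInt]
  have hinner : ∀ b : ℝ, (∫ a : ℝ, D.indicator (pd2 f) (b, a)) = 0 := by
    intro b
    by_cases hcase : b ^ 2 < R ^ 2
    · set s := Real.sqrt (R ^ 2 - b ^ 2) with hs
      have hs2 : s ^ 2 = R ^ 2 - b ^ 2 := Real.sq_sqrt (by linarith)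
      have hspos : 0 < s := Real.sqrt_pos.2 (by linarith)
      have hmem : ∀ a : ℝ, ((b, a) ∈ D) ↔ a ∈ Ioo (-s) s := by
        intro a
        simp only [hDdef, mem_setOf_eq, mem_Ioo]
        constructor
        · intro h
          have habs : |a| < s := by
            nlinarith [sq_abs a, abs_nonneg a]
          exact abs_lt.1 habs
        · rintro ⟨h1, h2⟩; nlinarith
      have hind : ∀ a : ℝ, D.indicator (pd2 f) (b, a)
          = (Ioo (-s) s).indicator (fun a => pd2 f (b, a)) a := by
        intro a
        by_cases hmem' : (b, a) ∈ D
        · rw [indicator_of_mem hmem', indicator_of_mem ((hmem a).1 hmem')]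
        · rw [indicator_of_notMem hmem',
            indicator_of_notMem (fun hc => hmem' ((hmem a).2 hc))]
      calc (∫ a : ℝ, D.indicator (pd2 f) (b, a))
          = ∫ a : ℝ, (Ioo (-s) s).indicator (fun a => pd2 f (b, a)) a := by
            exact integral_congr_ae (Filter.Eventually.of_forall hind)
        _ = ∫ a in Ioo (-s) s, pd2 f (b, a) := integral_indicator measurableSet_Ioo
        _ = ∫ a in Ioc (-s) s, pd2 f (b, a) := (integral_Ioc_eq_integral_Ioo).symm
        _ = ∫ a in (-s)..s, pd2 f (b, a) :=
            (intervalIntegral.integral_of_le (by linarith)).symm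
        _ = f (b, s) - f (b, -s) := by
            apply intervalIntegral.integral_eq_sub_of_hasDerivAt
              (f := fun a => f (b, a)) (f' := fun a => pd2 f (b, a))
            · intro a _
              exact hasDerivAt_pd2 hdiff (b, a)
            · exact (hpd.comp (by fun_prop)).intervalIntegrable _ _
        _ = 0 := by
            rw [hb (b, s) (by simp; nlinarith), hb (b, -s) (by simp; nlinarith)]
            ring
    · have hempty : ∀ a : ℝ, (b, a) ∉ D := by
        intro a ha
        simp only [hDdef, mem_setOf_eq] at ha
        nlinarith [sq_nonneg a]
      simp only [fun a => indicator_of_notMem (hempty a) (pd2 f)]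
      exact integral_zero ℝ ℝ
  simp only [hinner, integral_zero]

lemma pd_pointwise (ν ω₀ : ℝ) (U1 U2 P V1 V2 W Q G1 G2 : ℝ × ℝ → ℝ)
    (hU1 : ContDiff ℝ (⊤ : ℕ∞) U1) (hU2 : ContDiff ℝ (⊤ : ℕ∞) U2) (hP : ContDiff ℝ (⊤ : ℕ∞) P)
    (hV1 : V1 = fun z => U1 z + ω₀ / 2 * z.2)
    (hV2 : V2 = fun z => U2 z + -(ω₀ / 2) * z.1)
    (hW : W = fun z => V1 z * V1 z + V2 z * V2 z)
    (hQ : Q = fun z => P z + -((ω₀ / 2) ^ 2 / 2) * (z.1 * z.1 + z.2 * z.2))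
    (hG1 : G1 = fun z => (-1) * (U1 z * W z) + (-2) * (V1 z * Q z)
      + (2 * ν) * (V1 z * pd1 V1 z + V2 z * pd1 V2 z))
    (hG2 : G2 = fun z => (-1) * (U2 z * W z) + (-2) * (V2 z * Q z)
      + (2 * ν) * (V1 z * pd2 V1 z + V2 z * pd2 V2 z))
    (y : ℝ × ℝ) (d1 d2 : ℝ)
    (hdiv : pd1 U1 y + pd2 U2 y = 0)
    (h1 : d1 + U1 y * pd1 U1 y + U2 y * pd2 U1 y = - pd1 P y + ν * lap U1 y)
    (h2 : d2 + U1 y * pd1 U2 y + U2 y * pd2 U2 y = - pd2 P y + ν * lap U2 y) :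
    pd1 G1 y + pd2 G2 y
      = 2 * V1 y * d1 + 2 * V2 y * d2
        + 2 * ν * ((pd1 V1 y) ^ 2 + (pd2 V1 y) ^ 2 + (pd1 V2 y) ^ 2 + (pd2 V2 y) ^ 2) := by
  have hV1c : ContDiff ℝ (⊤ : ℕ∞) V1 := by rw [hV1]; exact hU1.add (by fun_prop)
  have hV2c : ContDiff ℝ (⊤ : ℕ∞) V2 := by rw [hV2]; exact hU2.add (by fun_prop)
  have hQc : ContDiff ℝ (⊤ : ℕ∞) Q := by rw [hQ]; exact hP.add (by fun_prop)
  have hU1d : Differentiable ℝ U1 := hU1.differentiable (by simp)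
  have hU2d : Differentiable ℝ U2 := hU2.differentiable (by simp)
  have hPd : Differentiable ℝ P := hP.differentiable (by simp)
  have hV1d : Differentiable ℝ V1 := hV1c.differentiable (by simp)
  have hV2d : Differentiable ℝ V2 := hV2c.differentiable (by simp)
  have hQd : Differentiable ℝ Q := hQc.differentiable (by simp)
  have hA1d : Differentiable ℝ (pd1 V1) := (contDiff_pd1 hV1c).differentiable (by simp)
  have hA2d : Differentiable ℝ (pd2 V1) := (contDiff_pd2 hV1c).differentiable (by simp)
  have hB1d : Differentiable ℝ (pd1 V2) := (contDiff_pd1 hV2c).differentiable (by simp)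
  have hB2d : Differentiable ℝ (pd2 V2) := (contDiff_pd2 hV2c).differentiable (by simp)
  have hpU1d : Differentiable ℝ (pd1 U1) := (contDiff_pd1 hU1).differentiable (by simp)
  have hpU1d2 : Differentiable ℝ (pd2 U1) := (contDiff_pd2 hU1).differentiable (by simp)
  have hpU2d : Differentiable ℝ (pd1 U2) := (contDiff_pd1 hU2).differentiable (by simp)
  have hpU2d2 : Differentiable ℝ (pd2 U2) := (contDiff_pd2 hU2).differentiable (by simp)
  -- first derivative relations
  have hpV1a : pd1 V1 = pd1 U1 := by
    funext z
    have h0 : HasDerivAt (fun a => U1 (a, z.2) + ω₀ / 2 * z.2) (pd1 U1 z) z.1 :=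
      (hasDerivAt_pd1 hU1d z).add_const _
    have h : HasDerivAt (fun a => V1 (a, z.2)) (pd1 U1 z) z.1 := by rw [hV1]; exact h0
    exact h.deriv
  have hpV1b : pd2 V1 = fun z => pd2 U1 z + ω₀ / 2 * 1 := by
    funext z
    have h : HasDerivAt (fun a => V1 (z.1, a)) (pd2 U1 z + ω₀ / 2 * 1) z.2 := by
      rw [hV1]
      exact (hasDerivAt_pd2 hU1d z).add ((hasDerivAt_id z.2).const_mul (ω₀ / 2))
    exact h.deriv
  have hpV2a : pd1 V2 = fun z => pd1 U2 z + -(ω₀ / 2) * 1 := by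
    funext z
    have h : HasDerivAt (fun a => V2 (a, z.2)) (pd1 U2 z + -(ω₀ / 2) * 1) z.1 := by
      rw [hV2]
      exact (hasDerivAt_pd1 hU2d z).add ((hasDerivAt_id z.1).const_mul (-(ω₀ / 2)))
    exact h.deriv
  have hpV2b : pd2 V2 = pd2 U2 := by
    funext z
    have h0 : HasDerivAt (fun a => U2 (z.1, a) + -(ω₀ / 2) * z.1) (pd2 U2 z) z.2 :=
      (hasDerivAt_pd2 hU2d z).add_const _
    have h : HasDerivAt (fun a => V2 (z.1, a)) (pd2 U2 z) z.2 := by rw [hV2]; exact h0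
    exact h.deriv
  -- second derivative relations
  have h2V1a : pd1 (pd1 V1) y = pd1 (pd1 U1) y := by rw [hpV1a]
  have h2V1b : pd2 (pd2 V1) y = pd2 (pd2 U1) y := by
    rw [hpV1b]
    exact ((hasDerivAt_pd2 hpU1d2 y).add_const _).deriv
  have h2V2a : pd1 (pd1 V2) y = pd1 (pd1 U2) y := by
    rw [hpV2a]
    exact ((hasDerivAt_pd1 hpU2d y).add_const _).deriv
  have h2V2b : pd2 (pd2 V2) y = pd2 (pd2 U2) y := by rw [hpV2b]
  -- slice derivatives at y
  have sU1 := hasDerivAt_pd1 hU1d y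
  have sV1 := hasDerivAt_pd1 hV1d y
  have sV2 := hasDerivAt_pd1 hV2d y
  have sA1 := hasDerivAt_pd1 hA1d y
  have sB1 := hasDerivAt_pd1 hB1d y
  have sW : HasDerivAt (fun a => W (a, y.2))
      (pd1 V1 y * V1 y + V1 y * pd1 V1 y + (pd1 V2 y * V2 y + V2 y * pd1 V2 y)) y.1 := by
    rw [hW]; exact (sV1.mul sV1).add (sV2.mul sV2)
  have sQ : HasDerivAt (fun a => Q (a, y.2))
      (pd1 P y + -((ω₀ / 2) ^ 2 / 2) * (1 * y.1 + y.1 * 1)) y.1 := by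
    rw [hQ]
    exact (hasDerivAt_pd1 hPd y).add
      ((((hasDerivAt_id y.1).mul (hasDerivAt_id y.1)).add_const (y.2 * y.2)).const_mul _)
  have e1 : pd1 G1 y
      = (-1) * (pd1 U1 y * W y + U1 y * (pd1 V1 y * V1 y + V1 y * pd1 V1 y
          + (pd1 V2 y * V2 y + V2 y * pd1 V2 y)))
        + (-2) * (pd1 V1 y * Q y + V1 y * (pd1 P y + -((ω₀ / 2) ^ 2 / 2) * (1 * y.1 + y.1 * 1)))
        + (2 * ν) * ((pd1 V1 y * pd1 V1 y + V1 y * pd1 (pd1 V1) y)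
          + (pd1 V2 y * pd1 V2 y + V2 y * pd1 (pd1 V2) y)) := by
    rw [hG1]
    exact ((((sU1.mul sW).const_mul (-1)).add (((sV1.mul sQ).const_mul (-2)))).add
        ((((sV1.mul sA1).add (sV2.mul sB1)).const_mul (2 * ν)))).deriv
  have tU2 := hasDerivAt_pd2 hU2d y
  have tV1 := hasDerivAt_pd2 hV1d y
  have tV2 := hasDerivAt_pd2 hV2d y
  have tA2 := hasDerivAt_pd2 hA2d y
  have tB2 := hasDerivAt_pd2 hB2d y
  have tW : HasDerivAt (fun a => W (y.1, a))
      (pd2 V1 y * V1 y + V1 y * pd2 V1 y + (pd2 V2 y * V2 y + V2 y * pd2 V2 y)) y.2 := by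
    rw [hW]; exact (tV1.mul tV1).add (tV2.mul tV2)
  have tQ : HasDerivAt (fun a => Q (y.1, a))
      (pd2 P y + -((ω₀ / 2) ^ 2 / 2) * (1 * y.2 + y.2 * 1)) y.2 := by
    rw [hQ]
    have : HasDerivAt (fun a : ℝ => y.1 * y.1 + a * a) (1 * y.2 + y.2 * 1) y.2 :=
      (HasDerivAt.const_add (y.1 * y.1) ((hasDerivAt_id y.2).mul (hasDerivAt_id y.2)))
    exact (hasDerivAt_pd2 hPd y).add (this.const_mul _)
  have e2 : pd2 G2 y
      = (-1) * (pd2 U2 y * W y + U2 y * (pd2 V1 y * V1 y + V1 y * pd2 V1 y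
          + (pd2 V2 y * V2 y + V2 y * pd2 V2 y)))
        + (-2) * (pd2 V2 y * Q y + V2 y * (pd2 P y + -((ω₀ / 2) ^ 2 / 2) * (1 * y.2 + y.2 * 1)))
        + (2 * ν) * ((pd2 V1 y * pd2 V1 y + V1 y * pd2 (pd2 V1) y)
          + (pd2 V2 y * pd2 V2 y + V2 y * pd2 (pd2 V2) y)) := by
    rw [hG2]
    exact ((((tU2.mul tW).const_mul (-1)).add (((tV2.mul tQ).const_mul (-2)))).add
        ((((tV1.mul tA2).add (tV2.mul tB2)).const_mul (2 * ν)))).deriv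
  simp only [lap] at h1 h2
  rw [e1, e2, h2V1a, h2V1b, h2V2a, h2V2b, hpV1a, hpV2b]
  simp only [hpV1b, hpV2a]
  simp only [hW, hQ, hV1, hV2]
  linear_combination (-2 * (U1 y + ω₀ / 2 * y.2)) * h1 + (-2 * (U2 y + -(ω₀ / 2) * y.1)) * h2
    + (-((U1 y + ω₀ / 2 * y.2) * (U1 y + ω₀ / 2 * y.2)
        + (U2 y + -(ω₀ / 2) * y.1) * (U2 y + -(ω₀ / 2) * y.1))
       - 2 * (P y + -((ω₀ / 2) ^ 2 / 2) * (y.1 * y.1 + y.2 * y.2))) * hdiv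

lemma edot_le (R ν ω₀ lam1 : ℝ) (hR : 0 < R) (hν : 0 < ν)
    (U1 U2 P : ℝ × ℝ → ℝ) (hU1 : ContDiff ℝ (⊤ : ℕ∞) U1) (hU2 : ContDiff ℝ (⊤ : ℕ∞) U2)
    (hP : ContDiff ℝ (⊤ : ℕ∞) P) (d1 d2 : ℝ × ℝ → ℝ) (hd1c : Continuous d1) (hd2c : Continuous d2)
    (hNS1 : ∀ y ∈ {x : ℝ × ℝ | x.1 ^ 2 + x.2 ^ 2 < R ^ 2},
      d1 y + U1 y * pd1 U1 y + U2 y * pd2 U1 y = - pd1 P y + ν * lap U1 y)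
    (hNS2 : ∀ y ∈ {x : ℝ × ℝ | x.1 ^ 2 + x.2 ^ 2 < R ^ 2},
      d2 y + U1 y * pd1 U2 y + U2 y * pd2 U2 y = - pd2 P y + ν * lap U2 y)
    (hdiv : ∀ y ∈ {x : ℝ × ℝ | x.1 ^ 2 + x.2 ^ 2 < R ^ 2}, pd1 U1 y + pd2 U2 y = 0)
    (hbc1 : ∀ y : ℝ × ℝ, y.1 ^ 2 + y.2 ^ 2 = R ^ 2 → U1 y + ω₀ / 2 * y.2 = 0)
    (hbc2 : ∀ y : ℝ × ℝ, y.1 ^ 2 + y.2 ^ 2 = R ^ 2 → U2 y + -(ω₀ / 2) * y.1 = 0)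
    (hPoincare : ∀ v : ℝ × ℝ → ℝ, ContDiff ℝ (⊤ : ℕ∞) v →
      (∀ x : ℝ × ℝ, x.1 ^ 2 + x.2 ^ 2 = R ^ 2 → v x = 0) →
      lam1 * ∫ x in {x : ℝ × ℝ | x.1 ^ 2 + x.2 ^ 2 < R ^ 2}, (v x) ^ 2
        ≤ ∫ x in {x : ℝ × ℝ | x.1 ^ 2 + x.2 ^ 2 < R ^ 2},
            ((pd1 v x) ^ 2 + (pd2 v x) ^ 2)) :
    (∫ y in {x : ℝ × ℝ | x.1 ^ 2 + x.2 ^ 2 < R ^ 2},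
        (2 * (U1 y + ω₀ / 2 * y.2) * d1 y + 2 * (U2 y + -(ω₀ / 2) * y.1) * d2 y))
      ≤ -2 * ν * lam1 * ∫ y in {x : ℝ × ℝ | x.1 ^ 2 + x.2 ^ 2 < R ^ 2},
          ((U1 y + ω₀ / 2 * y.2) ^ 2 + (U2 y + -(ω₀ / 2) * y.1) ^ 2) := by
  obtain ⟨V1, hV1def⟩ : ∃ V1 : ℝ × ℝ → ℝ, V1 = fun z => U1 z + ω₀ / 2 * z.2 := ⟨_, rfl⟩
  obtain ⟨V2, hV2def⟩ : ∃ V2 : ℝ × ℝ → ℝ, V2 = fun z => U2 z + -(ω₀ / 2) * z.1 := ⟨_, rfl⟩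
  obtain ⟨W, hWdef⟩ : ∃ W : ℝ × ℝ → ℝ, W = fun z => V1 z * V1 z + V2 z * V2 z := ⟨_, rfl⟩
  obtain ⟨Q, hQdef⟩ : ∃ Q : ℝ × ℝ → ℝ,
    Q = fun z => P z + -((ω₀ / 2) ^ 2 / 2) * (z.1 * z.1 + z.2 * z.2) := ⟨_, rfl⟩
  obtain ⟨G1, hG1def⟩ : ∃ G1 : ℝ × ℝ → ℝ, G1 = fun z => (-1) * (U1 z * W z)
      + (-2) * (V1 z * Q z) + (2 * ν) * (V1 z * pd1 V1 z + V2 z * pd1 V2 z) := ⟨_, rfl⟩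
  obtain ⟨G2, hG2def⟩ : ∃ G2 : ℝ × ℝ → ℝ, G2 = fun z => (-1) * (U2 z * W z)
      + (-2) * (V2 z * Q z) + (2 * ν) * (V1 z * pd2 V1 z + V2 z * pd2 V2 z) := ⟨_, rfl⟩
  set Ds := {x : ℝ × ℝ | x.1 ^ 2 + x.2 ^ 2 < R ^ 2} with hDs
  have hDm : MeasurableSet Ds := measurableSet_D R
  have hV1c : ContDiff ℝ (⊤ : ℕ∞) V1 := by rw [hV1def]; exact hU1.add (by fun_prop)
  have hV2c : ContDiff ℝ (⊤ : ℕ∞) V2 := by rw [hV2def]; exact hU2.add (by fun_prop)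
  have hWc : ContDiff ℝ (⊤ : ℕ∞) W := by rw [hWdef]; exact (hV1c.mul hV1c).add (hV2c.mul hV2c)
  have hQc : ContDiff ℝ (⊤ : ℕ∞) Q := by rw [hQdef]; exact hP.add (by fun_prop)
  have hG1c : ContDiff ℝ (⊤ : ℕ∞) G1 := by
    rw [hG1def]
    exact ((contDiff_const.mul (hU1.mul hWc)).add (contDiff_const.mul (hV1c.mul hQc))).add
      (contDiff_const.mul ((hV1c.mul (contDiff_pd1 hV1c)).add (hV2c.mul (contDiff_pd1 hV2c))))
  have hG2c : ContDiff ℝ (⊤ : ℕ∞) G2 := by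
    rw [hG2def]
    exact ((contDiff_const.mul (hU2.mul hWc)).add (contDiff_const.mul (hV2c.mul hQc))).add
      (contDiff_const.mul ((hV1c.mul (contDiff_pd2 hV1c)).add (hV2c.mul (contDiff_pd2 hV2c))))
  -- boundary vanishing
  have hbV1 : ∀ x : ℝ × ℝ, x.1 ^ 2 + x.2 ^ 2 = R ^ 2 → V1 x = 0 := by
    intro x hx; rw [hV1def]; exact hbc1 x hx
  have hbV2 : ∀ x : ℝ × ℝ, x.1 ^ 2 + x.2 ^ 2 = R ^ 2 → V2 x = 0 := by
    intro x hx; rw [hV2def]; exact hbc2 x hx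
  have hbG1 : ∀ x : ℝ × ℝ, x.1 ^ 2 + x.2 ^ 2 = R ^ 2 → G1 x = 0 := by
    intro x hx
    have e1 := hbV1 x hx
    have e2 := hbV2 x hx
    rw [hG1def]
    simp only [hWdef]
    rw [e1, e2]
    ring
  have hbG2 : ∀ x : ℝ × ℝ, x.1 ^ 2 + x.2 ^ 2 = R ^ 2 → G2 x = 0 := by
    intro x hx
    have e1 := hbV1 x hx
    have e2 := hbV2 x hx
    rw [hG2def]
    simp only [hWdef]
    rw [e1, e2]
    ring
  -- pointwise identity on Ds
  have key : ∀ y ∈ Ds,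
      (2 * (U1 y + ω₀ / 2 * y.2) * d1 y + 2 * (U2 y + -(ω₀ / 2) * y.1) * d2 y)
        = (pd1 G1 y + pd2 G2 y)
          + (-2 * ν) * (((pd1 V1 y) ^ 2 + (pd2 V1 y) ^ 2)
            + ((pd1 V2 y) ^ 2 + (pd2 V2 y) ^ 2)) := by
    intro y hy
    have h := pd_pointwise ν ω₀ U1 U2 P V1 V2 W Q G1 G2 hU1 hU2 hP hV1def hV2def hWdef hQdef
      hG1def hG2def y (d1 y) (d2 y) (hdiv y hy) (hNS1 y hy) (hNS2 y hy)
    have hv1 : V1 y = U1 y + ω₀ / 2 * y.2 := by rw [hV1def]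
    have hv2 : V2 y = U2 y + -(ω₀ / 2) * y.1 := by rw [hV2def]
    rw [hv1, hv2] at h
    linarith
  -- integrability
  have iEdot : IntegrableOn
      (fun y => 2 * (U1 y + ω₀ / 2 * y.2) * d1 y + 2 * (U2 y + -(ω₀ / 2) * y.1) * d2 y)
      Ds volume := by
    apply integrableOn_D hR
    have c1 := hU1.continuous
    have c2 := hU2.continuous
    fun_prop
  have iG1 : IntegrableOn (fun y => pd1 G1 y) Ds volume :=
    integrableOn_D hR (contDiff_pd1 hG1c).continuous
  have iG2 : IntegrableOn (fun y => pd2 G2 y) Ds volume :=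
    integrableOn_D hR (contDiff_pd2 hG2c).continuous
  have cgrad1 : Continuous fun y => (pd1 V1 y) ^ 2 + (pd2 V1 y) ^ 2 := by
    have c1 := (contDiff_pd1 hV1c).continuous
    have c2 := (contDiff_pd2 hV1c).continuous
    fun_prop
  have cgrad2 : Continuous fun y => (pd1 V2 y) ^ 2 + (pd2 V2 y) ^ 2 := by
    have c1 := (contDiff_pd1 hV2c).continuous
    have c2 := (contDiff_pd2 hV2c).continuous
    fun_prop
  have igrad1 : IntegrableOn (fun y => (pd1 V1 y) ^ 2 + (pd2 V1 y) ^ 2) Ds volume :=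
    integrableOn_D hR cgrad1
  have igrad2 : IntegrableOn (fun y => (pd1 V2 y) ^ 2 + (pd2 V2 y) ^ 2) Ds volume :=
    integrableOn_D hR cgrad2
  have iV1sq : IntegrableOn (fun y => (V1 y) ^ 2) Ds volume :=
    integrableOn_D hR (hV1c.continuous.pow 2)
  have iV2sq : IntegrableOn (fun y => (V2 y) ^ 2) Ds volume :=
    integrableOn_D hR (hV2c.continuous.pow 2)
  -- main computation
  have hstep : (∫ y in Ds,
      (2 * (U1 y + ω₀ / 2 * y.2) * d1 y + 2 * (U2 y + -(ω₀ / 2) * y.1) * d2 y))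
      = ∫ y in Ds, ((pd1 G1 y + pd2 G2 y)
          + (-2 * ν) * (((pd1 V1 y) ^ 2 + (pd2 V1 y) ^ 2)
            + ((pd1 V2 y) ^ 2 + (pd2 V2 y) ^ 2))) :=
    setIntegral_congr_fun hDm key
  have hzero1 : ∫ y in Ds, pd1 G1 y = 0 :=
    integral_pd1_zero hR hG1c (contDiff_pd1 hG1c).continuous hbG1
  have hzero2 : ∫ y in Ds, pd2 G2 y = 0 :=
    integral_pd2_zero hR hG2c (contDiff_pd2 hG2c).continuous hbG2
  have hsplit : (∫ y in Ds, ((pd1 G1 y + pd2 G2 y)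
          + (-2 * ν) * (((pd1 V1 y) ^ 2 + (pd2 V1 y) ^ 2)
            + ((pd1 V2 y) ^ 2 + (pd2 V2 y) ^ 2))))
      = (-2 * ν) * ((∫ y in Ds, ((pd1 V1 y) ^ 2 + (pd2 V1 y) ^ 2))
          + ∫ y in Ds, ((pd1 V2 y) ^ 2 + (pd2 V2 y) ^ 2)) := by
    have iSum : IntegrableOn (fun y => pd1 G1 y + pd2 G2 y) Ds volume := iG1.add iG2
    have igrads : IntegrableOn (fun y => ((pd1 V1 y) ^ 2 + (pd2 V1 y) ^ 2)
        + ((pd1 V2 y) ^ 2 + (pd2 V2 y) ^ 2)) Ds volume := igrad1.add igrad2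
    have igradc : IntegrableOn (fun y => (-2 * ν) * (((pd1 V1 y) ^ 2 + (pd2 V1 y) ^ 2)
        + ((pd1 V2 y) ^ 2 + (pd2 V2 y) ^ 2))) Ds volume := igrads.const_mul _
    rw [integral_add iSum igradc, integral_add iG1 iG2, hzero1, hzero2,
      MeasureTheory.integral_const_mul, integral_add igrad1 igrad2]
    ring
  have hp1 := hPoincare V1 hV1c hbV1
  have hp2 := hPoincare V2 hV2c hbV2
  have hEsplit : (∫ y in Ds, ((U1 y + ω₀ / 2 * y.2) ^ 2 + (U2 y + -(ω₀ / 2) * y.1) ^ 2))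
      = (∫ y in Ds, (V1 y) ^ 2) + ∫ y in Ds, (V2 y) ^ 2 := by
    rw [← integral_add iV1sq iV2sq]
    apply setIntegral_congr_fun hDm
    intro y _
    rw [hV1def, hV2def]
  rw [hstep, hsplit, hEsplit]
  nlinarith [hp1, hp2, hν.le]

lemma hasDerivAt_time_slice {g : ℝ × (ℝ × ℝ) → ℝ} (hg : Differentiable ℝ g)
    (t : ℝ) (x : ℝ × ℝ) :
    HasDerivAt (fun s => g (s, x)) (fderiv ℝ g (t, x) (1, 0)) t := by
  exact (hg (t, x)).hasFDerivAt.comp_hasDerivAt t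
    (HasDerivAt.prodMk (hasDerivAt_id t) (hasDerivAt_const _ _))

lemma energy_hasDeriv (R ω₀ : ℝ) (hR : 0 < R) (u : ℝ → ℝ × ℝ → ℝ × ℝ)
    (hu : ContDiff ℝ (⊤ : ℕ∞) (fun q : ℝ × (ℝ × ℝ) => u q.1 q.2)) (t0 : ℝ) :
    HasDerivAt (fun t => ∫ x in {x : ℝ × ℝ | x.1 ^ 2 + x.2 ^ 2 < R ^ 2},
        (((u t x).1 + ω₀ / 2 * x.2) ^ 2 + ((u t x).2 + -(ω₀ / 2) * x.1) ^ 2))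
      (∫ x in {x : ℝ × ℝ | x.1 ^ 2 + x.2 ^ 2 < R ^ 2},
        (2 * ((u t0 x).1 + ω₀ / 2 * x.2) * deriv (fun s => (u s x).1) t0
          + 2 * ((u t0 x).2 + -(ω₀ / 2) * x.1) * deriv (fun s => (u s x).2) t0)) t0 := by
  set Ds := {x : ℝ × ℝ | x.1 ^ 2 + x.2 ^ 2 < R ^ 2} with hDs
  have hDm : MeasurableSet Ds := measurableSet_D R
  have hΦ1 : ContDiff ℝ (⊤ : ℕ∞) (fun q : ℝ × (ℝ × ℝ) => (u q.1 q.2).1) := contDiff_fst.comp hu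
  have hΦ2 : ContDiff ℝ (⊤ : ℕ∞) (fun q : ℝ × (ℝ × ℝ) => (u q.1 q.2).2) := contDiff_snd.comp hu
  have hΦ1d : Differentiable ℝ (fun q : ℝ × (ℝ × ℝ) => (u q.1 q.2).1) :=
    hΦ1.differentiable (by simp)
  have hΦ2d : Differentiable ℝ (fun q : ℝ × (ℝ × ℝ) => (u q.1 q.2).2) :=
    hΦ2.differentiable (by simp)
  have hd1eq : ∀ (s : ℝ) (x : ℝ × ℝ), deriv (fun σ => (u σ x).1) s
      = fderiv ℝ (fun q : ℝ × (ℝ × ℝ) => (u q.1 q.2).1) (s, x) (1, 0) := fun s x =>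
    (hasDerivAt_time_slice hΦ1d s x).deriv
  have hd2eq : ∀ (s : ℝ) (x : ℝ × ℝ), deriv (fun σ => (u σ x).2) s
      = fderiv ℝ (fun q : ℝ × (ℝ × ℝ) => (u q.1 q.2).2) (s, x) (1, 0) := fun s x =>
    (hasDerivAt_time_slice hΦ2d s x).deriv
  have hfd1c : Continuous (fun q : ℝ × (ℝ × ℝ) =>
      fderiv ℝ (fun q : ℝ × (ℝ × ℝ) => (u q.1 q.2).1) q (1, 0)) :=
    ((hΦ1.fderiv_right (m := (⊤ : ℕ∞)) (le_of_eq rfl)).clm_apply contDiff_const).continuous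
  have hfd2c : Continuous (fun q : ℝ × (ℝ × ℝ) =>
      fderiv ℝ (fun q : ℝ × (ℝ × ℝ) => (u q.1 q.2).2) q (1, 0)) :=
    ((hΦ2.fderiv_right (m := (⊤ : ℕ∞)) (le_of_eq rfl)).clm_apply contDiff_const).continuous
  have hC'c : Continuous (fun q : ℝ × (ℝ × ℝ) =>
      2 * ((u q.1 q.2).1 + ω₀ / 2 * q.2.2)
        * fderiv ℝ (fun q : ℝ × (ℝ × ℝ) => (u q.1 q.2).1) q (1, 0)
      + 2 * ((u q.1 q.2).2 + -(ω₀ / 2) * q.2.1)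
        * fderiv ℝ (fun q : ℝ × (ℝ × ℝ) => (u q.1 q.2).2) q (1, 0)) := by
    have c1 := hΦ1.continuous
    have c2 := hΦ2.continuous
    fun_prop
  obtain ⟨M, hM⟩ := ((isCompact_closedBall t0 1).prod
    (isCompact_closedBall (0 : ℝ × ℝ) R)).exists_bound_of_continuousOn hC'c.continuousOn
  have hFc : ∀ s : ℝ, Continuous (fun x : ℝ × ℝ =>
      ((u s x).1 + ω₀ / 2 * x.2) ^ 2 + ((u s x).2 + -(ω₀ / 2) * x.1) ^ 2) := by
    intro s
    have c1 : Continuous (fun x : ℝ × ℝ => u s x) :=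
      hu.continuous.comp (Continuous.prodMk_right s)
    fun_prop
  have hF'eq : ∀ (s : ℝ) (x : ℝ × ℝ),
      (2 * ((u s x).1 + ω₀ / 2 * x.2) * deriv (fun σ => (u σ x).1) s
        + 2 * ((u s x).2 + -(ω₀ / 2) * x.1) * deriv (fun σ => (u σ x).2) s)
      = (2 * ((u s x).1 + ω₀ / 2 * x.2)
          * fderiv ℝ (fun q : ℝ × (ℝ × ℝ) => (u q.1 q.2).1) (s, x) (1, 0)
        + 2 * ((u s x).2 + -(ω₀ / 2) * x.1)
          * fderiv ℝ (fun q : ℝ × (ℝ × ℝ) => (u q.1 q.2).2) (s, x) (1, 0)) := by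
    intro s x
    rw [hd1eq s x, hd2eq s x]
  have H := hasDerivAt_integral_of_dominated_loc_of_deriv_le
    (F := fun (s : ℝ) (x : ℝ × ℝ) =>
      ((u s x).1 + ω₀ / 2 * x.2) ^ 2 + ((u s x).2 + -(ω₀ / 2) * x.1) ^ 2)
    (F' := fun (s : ℝ) (x : ℝ × ℝ) =>
      2 * ((u s x).1 + ω₀ / 2 * x.2) * deriv (fun σ => (u σ x).1) s
        + 2 * ((u s x).2 + -(ω₀ / 2) * x.1) * deriv (fun σ => (u σ x).2) s)
    (μ := volume.restrict Ds) (x₀ := t0) (bound := fun _ => M) (s := Metric.ball t0 1) (Metric.ball_mem_nhds t0 one_pos)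
    (Filter.Eventually.of_forall fun s => (hFc s).aestronglyMeasurable)
    (integrableOn_D hR (hFc t0))
    (((hC'c.comp (Continuous.prodMk_right t0)).aestronglyMeasurable).congr
      (Filter.Eventually.of_forall fun x => (hF'eq t0 x).symm))
    (by
      filter_upwards [ae_restrict_mem hDm] with x hx
      intro s hs
      rw [hF'eq s x]
      exact hM (s, x) (Set.mk_mem_prod (Metric.ball_subset_closedBall hs)
        (D_subset_ball hR hx)))
    (integrableOn_D hR continuous_const)
    (by
      filter_upwards with x
      intro s _
      have h1 : HasDerivAt (fun σ => (u σ x).1 + ω₀ / 2 * x.2)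
          (fderiv ℝ (fun q : ℝ × (ℝ × ℝ) => (u q.1 q.2).1) (s, x) (1, 0)) s :=
        (hasDerivAt_time_slice hΦ1d s x).add_const _
      have h2 : HasDerivAt (fun σ => (u σ x).2 + -(ω₀ / 2) * x.1)
          (fderiv ℝ (fun q : ℝ × (ℝ × ℝ) => (u q.1 q.2).2) (s, x) (1, 0)) s :=
        (hasDerivAt_time_slice hΦ2d s x).add_const _
      have h := (h1.pow 2).add (h2.pow 2)
      convert h using 1
      · rfl
      rw [hF'eq s x]
      push_cast
      ring)
  exact H.2

end AoT


open AoT in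
/-- **Absence of turbulence on the disk.**  If Navier–Stokes on the disk of radius `R`
is forced on the boundary by the slip of the solid body rotation `u_sb = (ω₀/2) x^⊥`
(i.e. `u = u_sb` on `∂D`), then every smooth solution converges exponentially in `L²`
to `u_sb`, with rate `λ₁ ν` where `λ₁` is the first Dirichlet eigenvalue of `-Δ` on `D`
(formalized as a constant satisfying the Poincaré inequality). -/
theorem absence_of_turbulence_disk
    (R ν ω₀ lam1 : ℝ) (hR : 0 < R) (hν : 0 < ν) (hlam : 0 < lam1)
    (D : Set (ℝ × ℝ)) (hD : D = {x : ℝ × ℝ | x.1 ^ 2 + x.2 ^ 2 < R ^ 2})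
    (usb : ℝ × ℝ → ℝ × ℝ) (husb : usb = fun x => (ω₀ / 2 * (-x.2), ω₀ / 2 * x.1))
    (hPoincare : ∀ v : ℝ × ℝ → ℝ, ContDiff ℝ (⊤ : ℕ∞) v →
      (∀ x : ℝ × ℝ, x.1 ^ 2 + x.2 ^ 2 = R ^ 2 → v x = 0) →
      lam1 * ∫ x in D, (v x) ^ 2 ≤ ∫ x in D, ((pd1 v x) ^ 2 + (pd2 v x) ^ 2))
    (u : ℝ → ℝ × ℝ → ℝ × ℝ) (p : ℝ → ℝ × ℝ → ℝ)
    (hu : ContDiff ℝ (⊤ : ℕ∞) (fun q : ℝ × (ℝ × ℝ) => u q.1 q.2))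
    (hp : ContDiff ℝ (⊤ : ℕ∞) (fun q : ℝ × (ℝ × ℝ) => p q.1 q.2))
    (hNS1 : ∀ t ≥ (0:ℝ), ∀ x ∈ D,
      deriv (fun s => (u s x).1) t
        + (u t x).1 * pd1 (fun y => (u t y).1) x + (u t x).2 * pd2 (fun y => (u t y).1) x
      = - pd1 (p t) x + ν * lap (fun y => (u t y).1) x)
    (hNS2 : ∀ t ≥ (0:ℝ), ∀ x ∈ D,
      deriv (fun s => (u s x).2) t
        + (u t x).1 * pd1 (fun y => (u t y).2) x + (u t x).2 * pd2 (fun y => (u t y).2) x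
      = - pd2 (p t) x + ν * lap (fun y => (u t y).2) x)
    (hdiv : ∀ t ≥ (0:ℝ), ∀ x ∈ D,
      pd1 (fun y => (u t y).1) x + pd2 (fun y => (u t y).2) x = 0)
    (hbc : ∀ t ≥ (0:ℝ), ∀ x : ℝ × ℝ, x.1 ^ 2 + x.2 ^ 2 = R ^ 2 → u t x = usb x) :
    ∀ t ≥ (0:ℝ),
      Real.sqrt (∫ x in D, (((u t x).1 - (usb x).1) ^ 2 + ((u t x).2 - (usb x).2) ^ 2))
        ≤ Real.sqrt (∫ x in D, (((u 0 x).1 - (usb x).1) ^ 2 + ((u 0 x).2 - (usb x).2) ^ 2))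
          * Real.exp (-(lam1 * ν * t)) := by
  subst hD
  set Ds := {x : ℝ × ℝ | x.1 ^ 2 + x.2 ^ 2 < R ^ 2} with hDs
  have hDm : MeasurableSet Ds := measurableSet_D R
  obtain ⟨E, hEdef⟩ : ∃ E : ℝ → ℝ, E = fun t => ∫ x in Ds,
      (((u t x).1 + ω₀ / 2 * x.2) ^ 2 + ((u t x).2 + -(ω₀ / 2) * x.1) ^ 2) := ⟨_, rfl⟩
  obtain ⟨Ed, hEddef⟩ : ∃ Ed : ℝ → ℝ, Ed = fun t => ∫ x in Ds,
      (2 * ((u t x).1 + ω₀ / 2 * x.2) * deriv (fun s => (u s x).1) t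
        + 2 * ((u t x).2 + -(ω₀ / 2) * x.1) * deriv (fun s => (u s x).2) t) := ⟨_, rfl⟩
  have hEderiv : ∀ t0 : ℝ, HasDerivAt E (Ed t0) t0 := by
    intro t0
    rw [hEdef, hEddef]
    exact energy_hasDeriv R ω₀ hR u hu t0
  -- continuity of time derivatives in space
  have hΦ1 : ContDiff ℝ (⊤ : ℕ∞) (fun q : ℝ × (ℝ × ℝ) => (u q.1 q.2).1) := contDiff_fst.comp hu
  have hΦ2 : ContDiff ℝ (⊤ : ℕ∞) (fun q : ℝ × (ℝ × ℝ) => (u q.1 q.2).2) := contDiff_snd.comp hu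
  have hd1c : ∀ t0 : ℝ, Continuous (fun x : ℝ × ℝ => deriv (fun s => (u s x).1) t0) := by
    intro t0
    have heq : (fun x : ℝ × ℝ => deriv (fun s => (u s x).1) t0)
        = fun x : ℝ × ℝ => fderiv ℝ (fun q : ℝ × (ℝ × ℝ) => (u q.1 q.2).1) (t0, x) (1, 0) :=
      funext fun x => (hasDerivAt_time_slice (hΦ1.differentiable (by simp)) t0 x).deriv
    rw [heq]
    exact (((hΦ1.fderiv_right (m := (⊤ : ℕ∞)) (le_of_eq rfl)).clm_apply contDiff_const).continuous).comp
      (Continuous.prodMk_right t0)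
  have hd2c : ∀ t0 : ℝ, Continuous (fun x : ℝ × ℝ => deriv (fun s => (u s x).2) t0) := by
    intro t0
    have heq : (fun x : ℝ × ℝ => deriv (fun s => (u s x).2) t0)
        = fun x : ℝ × ℝ => fderiv ℝ (fun q : ℝ × (ℝ × ℝ) => (u q.1 q.2).2) (t0, x) (1, 0) :=
      funext fun x => (hasDerivAt_time_slice (hΦ2.differentiable (by simp)) t0 x).deriv
    rw [heq]
    exact (((hΦ2.fderiv_right (m := (⊤ : ℕ∞)) (le_of_eq rfl)).clm_apply contDiff_const).continuous).comp
      (Continuous.prodMk_right t0)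
  -- the energy inequality
  have hEdot_le : ∀ t0 : ℝ, 0 ≤ t0 → Ed t0 ≤ -2 * ν * lam1 * E t0 := by
    intro t0 ht0
    rw [hEdef, hEddef]
    exact edot_le R ν ω₀ lam1 hR hν
      (fun y => (u t0 y).1) (fun y => (u t0 y).2) (p t0)
      (hΦ1.comp (contDiff_const.prodMk contDiff_id))
      (hΦ2.comp (contDiff_const.prodMk contDiff_id))
      (hp.comp (contDiff_const.prodMk contDiff_id))
      (fun x => deriv (fun s => (u s x).1) t0) (fun x => deriv (fun s => (u s x).2) t0)
      (hd1c t0) (hd2c t0)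
      (fun y hy => hNS1 t0 ht0 y hy)
      (fun y hy => hNS2 t0 ht0 y hy)
      (fun y hy => hdiv t0 ht0 y hy)
      (fun y hy => by
        have h := hbc t0 ht0 y hy
        rw [husb] at h
        have h1 : (u t0 y).1 = ω₀ / 2 * -y.2 := congrArg Prod.fst h
        show (u t0 y).1 + ω₀ / 2 * y.2 = 0
        rw [h1]; ring)
      (fun y hy => by
        have h := hbc t0 ht0 y hy
        rw [husb] at h
        have h2 : (u t0 y).2 = ω₀ / 2 * y.1 := congrArg Prod.snd h
        show (u t0 y).2 + -(ω₀ / 2) * y.1 = 0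
        rw [h2]; ring)
      hPoincare
  -- Gronwall
  have hEdiff : Differentiable ℝ E := fun t0 => (hEderiv t0).differentiableAt
  have hexp : ∀ t0 : ℝ, HasDerivAt (fun τ => Real.exp (2 * lam1 * ν * τ))
      (Real.exp (2 * lam1 * ν * t0) * (2 * lam1 * ν * 1)) t0 := by
    intro t0
    exact (HasDerivAt.const_mul (2 * lam1 * ν) (hasDerivAt_id t0)).exp
  have hant : AntitoneOn (fun τ => E τ * Real.exp (2 * lam1 * ν * τ)) (Ici (0:ℝ)) := by
    apply antitoneOn_of_deriv_nonpos (convex_Ici 0)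
    · exact (hEdiff.continuous.mul (Real.continuous_exp.comp (by fun_prop))).continuousOn
    · intro x _
      exact ((hEderiv x).mul (hexp x)).differentiableAt.differentiableWithinAt
    · intro x hx
      rw [interior_Ici] at hx
      rw [HasDerivAt.deriv (f := fun τ => E τ * Real.exp (2 * lam1 * ν * τ)) ((hEderiv x).mul (hexp x))]
      have h1 := hEdot_le x (le_of_lt hx)
      have h2 := Real.exp_pos (2 * lam1 * ν * x)
      have h3 : Ed x + 2 * lam1 * ν * E x ≤ 0 := by nlinarith
      nlinarith [mul_le_mul_of_nonneg_right h3 h2.le]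
  intro t ht
  have hmono := hant (self_mem_Ici) (mem_Ici.2 ht) ht
  simp only [mul_zero, Real.exp_zero, mul_one] at hmono
  have hexpos := Real.exp_pos (2 * lam1 * ν * t)
  have hEt : E t ≤ E 0 * Real.exp (-(2 * lam1 * ν * t)) := by
    calc E t = E t * (Real.exp (2 * lam1 * ν * t) * Real.exp (-(2 * lam1 * ν * t))) := by
          rw [← Real.exp_add]; simp
      _ = (E t * Real.exp (2 * lam1 * ν * t)) * Real.exp (-(2 * lam1 * ν * t)) := by ring
      _ ≤ E 0 * Real.exp (-(2 * lam1 * ν * t)) :=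
          mul_le_mul_of_nonneg_right hmono (Real.exp_nonneg _)
  -- rewrite goal integrals
  have hrw : ∀ τ : ℝ, (∫ x in Ds, (((u τ x).1 - (usb x).1) ^ 2 + ((u τ x).2 - (usb x).2) ^ 2))
      = E τ := by
    intro τ
    rw [hEdef]
    apply setIntegral_congr_fun hDm
    intro x _
    rw [husb]
    simp only
    ring
  rw [hrw t, hrw 0]
  have hE0 : 0 ≤ E 0 := by
    rw [hEdef]
    exact setIntegral_nonneg hDm (fun x _ => by positivity)
  calc Real.sqrt (E t) ≤ Real.sqrt (E 0 * Real.exp (-(2 * lam1 * ν * t))) :=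
        Real.sqrt_le_sqrt hEt
    _ = Real.sqrt (E 0) * Real.exp (-(lam1 * ν * t)) := by
        rw [Real.sqrt_mul hE0]
        congr 1
        rw [show -(2 * lam1 * ν * t) = -(lam1 * ν * t) + -(lam1 * ν * t) by ring,
          Real.exp_add, Real.sqrt_mul_self (Real.exp_nonneg _)]
end

section
/- Let 0 < α ≤ 1, ω₀ > 0, and let M := {(x₁,x₂) ∈ ℝ² : αx₁² + x₂² < 1} be an elliptical domain. Let u_sb(x) := ω₀(−x₂, αx₁), which is tangent to ∂M and is a steady solution of both the Euler and Navier–Stokes equations in M. Let λ₁ be the first Dirichlet eigenvalue of −Δ on M. Let ν > 0 and let u : [0,∞) × M̄ → ℝ², p : [0,∞) × M̄ → ℝ be smooth, satisfying ∂_t u + (u·∇)u = −∇p + νΔu and div u = 0 in M, with u(t,x) = u_sb(x) for x ∈ ∂M. Then for every t ≥ 0, ‖u(t,·) − u_sb‖_{L²(M)} ≤ ‖u(0,·) − u_sb‖_{L²(M)} · exp(−(νλ₁ − ω₀(1−α)) t). In particular, if ν > ν* := ω₀ λ₁^{−1}(1−α), then u(t) converges exponentially in L²(M) to u_sb as t →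 ∞. -/
open MeasureTheory Set Filter

section API
variable {f g : ℝ × ℝ → ℝ}

lemma hasDerivAt_slice1 (hf : ContDiff ℝ (⊤ : ℕ∞) f) (a b : ℝ) :
    HasDerivAt (fun s => f (s, b)) ((fderiv ℝ f (a, b)) (1, 0)) a := by
  have h1 : HasDerivAt (fun s : ℝ => (s, b)) ((1 : ℝ), (0 : ℝ)) a :=
    (hasDerivAt_id a).prodMk (hasDerivAt_const a b)
  exact ((hf.differentiable (by simp) (a, b)).hasFDerivAt.comp_hasDerivAt a h1)

lemma hasDerivAt_slice2 (hf : ContDiff ℝ (⊤ : ℕ∞) f) (a b : ℝ) :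
    HasDerivAt (fun s => f (a, s)) ((fderiv ℝ f (a, b)) (0, 1)) b := by
  have h1 : HasDerivAt (fun s : ℝ => (a, s)) ((0 : ℝ), (1 : ℝ)) b :=
    (hasDerivAt_const b a).prodMk (hasDerivAt_id b)
  exact ((hf.differentiable (by simp) (a, b)).hasFDerivAt.comp_hasDerivAt b h1)

lemma pd1_eq_fderiv (hf : ContDiff ℝ (⊤ : ℕ∞) f) (x : ℝ × ℝ) :
    pd1 f x = (fderiv ℝ f x) (1, 0) := by
  have := (hasDerivAt_slice1 hf x.1 x.2).deriv
  simpa [pd1] using this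

lemma pd2_eq_fderiv (hf : ContDiff ℝ (⊤ : ℕ∞) f) (x : ℝ × ℝ) :
    pd2 f x = (fderiv ℝ f x) (0, 1) := by
  have := (hasDerivAt_slice2 hf x.1 x.2).deriv
  simpa [pd2] using this

lemma hasDerivAt_pd1 (hf : ContDiff ℝ (⊤ : ℕ∞) f) (a b : ℝ) :
    HasDerivAt (fun s => f (s, b)) (pd1 f (a, b)) a := by
  rw [pd1_eq_fderiv hf]; exact hasDerivAt_slice1 hf a b

lemma hasDerivAt_pd2 (hf : ContDiff ℝ (⊤ : ℕ∞) f) (a b : ℝ) :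
    HasDerivAt (fun s => f (a, s)) (pd2 f (a, b)) b := by
  rw [pd2_eq_fderiv hf]; exact hasDerivAt_slice2 hf a b

lemma contDiff_pd1 (hf : ContDiff ℝ (⊤ : ℕ∞) f) : ContDiff ℝ (⊤ : ℕ∞) (pd1 f) := by
  have h : pd1 f = fun x => (fderiv ℝ f x) (1, 0) := funext fun x => pd1_eq_fderiv hf x
  rw [h]
  exact (hf.fderiv_right (le_refl _)).clm_apply contDiff_const

lemma contDiff_pd2 (hf : ContDiff ℝ (⊤ : ℕ∞) f) : ContDiff ℝ (⊤ : ℕ∞) (pd2 f) := by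
  have h : pd2 f = fun x => (fderiv ℝ f x) (0, 1) := funext fun x => pd2_eq_fderiv hf x
  rw [h]
  exact (hf.fderiv_right (le_refl _)).clm_apply contDiff_const

end API
section Dom
variable {α : ℝ}

lemma ellipseMeasurable (α : ℝ) : MeasurableSet {x : ℝ × ℝ | α * x.1 ^ 2 + x.2 ^ 2 < 1} := by
  apply measurableSet_lt <;> fun_prop

lemma ellipseBounded (hα : 0 < α) :
    Bornology.IsBounded {x : ℝ × ℝ | α * x.1 ^ 2 + x.2 ^ 2 < 1} := by
  rw [isBounded_iff_forall_norm_le]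
  refine ⟨1 / Real.sqrt α + 1, fun x hx => ?_⟩
  simp only [mem_setOf_eq] at hx
  have hs : 0 < Real.sqrt α := Real.sqrt_pos.2 hα
  have hs2 : Real.sqrt α ^ 2 = α := Real.sq_sqrt hα.le
  have hs1 : Real.sqrt α * (1 / Real.sqrt α) = 1 := mul_one_div_cancel (ne_of_gt hs)
  have h2 : |x.2| ≤ 1 := by
    rw [abs_le]; constructor <;> nlinarith [sq_nonneg x.1]
  have h1 : |x.1| ≤ 1 / Real.sqrt α + 1 := by
    rw [abs_le]; constructor <;> nlinarith [sq_nonneg x.2, sq_nonneg (x.1 * Real.sqrt α - 1),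
      sq_nonneg (x.1 * Real.sqrt α + 1)]
  have : ‖x‖ = max ‖x.1‖ ‖x.2‖ := rfl
  rw [this, Real.norm_eq_abs, Real.norm_eq_abs]
  exact max_le h1 (h2.trans (by linarith [one_div_nonneg.2 hs.le]))

lemma ellipseCompactClosure (hα : 0 < α) :
    IsCompact (closure {x : ℝ × ℝ | α * x.1 ^ 2 + x.2 ^ 2 < 1}) :=
  (ellipseBounded hα).isCompact_closure

lemma integrableOn_ellipse (hα : 0 < α) {g : ℝ × ℝ → ℝ} (hg : Continuous g) :
    IntegrableOn g {x : ℝ × ℝ | α * x.1 ^ 2 + x.2 ^ 2 < 1} := by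
  exact (hg.continuousOn.integrableOn_compact (ellipseCompactClosure hα)).mono_set
    subset_closure

end Dom

section Div
variable {α : ℝ}

lemma slice2_eq (α a : ℝ) (h : 0 < 1 - α * a ^ 2) :
    {b : ℝ | α * a ^ 2 + b ^ 2 < 1} = Ioo (-Real.sqrt (1 - α * a ^ 2)) (Real.sqrt (1 - α * a ^ 2)) := by
  have hc : 0 < Real.sqrt (1 - α * a ^ 2) := Real.sqrt_pos.2 h
  have hc2 : Real.sqrt (1 - α * a ^ 2) ^ 2 = 1 - α * a ^ 2 := Real.sq_sqrt h.le
  ext b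
  simp only [mem_setOf_eq, mem_Ioo]
  constructor
  · intro hb
    constructor <;> nlinarith [sq_nonneg (b - Real.sqrt (1 - α * a ^ 2)),
      sq_nonneg (b + Real.sqrt (1 - α * a ^ 2))]
  · rintro ⟨h1, h2⟩
    nlinarith

lemma integral_pd2_zero (hα : 0 < α) {F : ℝ × ℝ → ℝ} (hF : ContDiff ℝ (⊤ : ℕ∞) F)
    (hb : ∀ x : ℝ × ℝ, α * x.1 ^ 2 + x.2 ^ 2 = 1 → F x = 0) :
    ∫ x in {x : ℝ × ℝ | α * x.1 ^ 2 + x.2 ^ 2 < 1}, pd2 F x = 0 := by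
  set M := {x : ℝ × ℝ | α * x.1 ^ 2 + x.2 ^ 2 < 1} with hMdef
  have hMm : MeasurableSet M := ellipseMeasurable α
  have hg : Continuous (pd2 F) := (contDiff_pd2 hF).continuous
  have hint : Integrable (M.indicator (pd2 F)) volume :=
    (integrable_indicator_iff hMm).2 (integrableOn_ellipse hα hg)
  rw [← integral_indicator hMm]
  rw [Measure.volume_eq_prod]
  rw [Measure.volume_eq_prod] at hint
  rw [integral_prod _ hint]
  have inner : ∀ a : ℝ, ∫ b : ℝ, M.indicator (pd2 F) (a, b) = 0 := by
    intro a
    have hrw : (fun b : ℝ => M.indicator (pd2 F) (a, b))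
        = Set.indicator {b : ℝ | α * a ^ 2 + b ^ 2 < 1} (fun b => pd2 F (a, b)) := by
      funext b
      by_cases hm : α * a ^ 2 + b ^ 2 < 1
      · simp [hMdef, Set.indicator, hm]
      · simp [hMdef, Set.indicator, hm]
    rw [hrw]
    by_cases hcase : 0 < 1 - α * a ^ 2
    · set c := Real.sqrt (1 - α * a ^ 2) with hcdef
      have hc : 0 < c := Real.sqrt_pos.2 hcase
      have hc2 : c ^ 2 = 1 - α * a ^ 2 := Real.sq_sqrt hcase.le
      rw [slice2_eq α a hcase, integral_indicator measurableSet_Ioo]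
      have hderiv : (fun b : ℝ => pd2 F (a, b)) = deriv (fun s => F (a, s)) := by
        funext b; rfl
      have hdiff : ∀ y ∈ Set.uIcc (-c) c, DifferentiableAt ℝ (fun s => F (a, s)) y :=
        fun y _ => (hasDerivAt_slice2 hF a y).differentiableAt
      have hcont : IntervalIntegrable (deriv fun s => F (a, s)) volume (-c) c := by
        rw [← hderiv]
        exact (hg.comp (continuous_const.prodMk continuous_id)).intervalIntegrable _ _
      have hftc := intervalIntegral.integral_deriv_eq_sub hdiff hcont
      rw [intervalIntegral.integral_of_le (by linarith : -c ≤ c),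
        integral_Ioc_eq_integral_Ioo] at hftc
      rw [hderiv, hftc, hb (a, c) (by simp; nlinarith), hb (a, -c) (by simp; nlinarith)]
      ring
    · have : {b : ℝ | α * a ^ 2 + b ^ 2 < 1} = (∅ : Set ℝ) := by
        ext b; simp only [mem_setOf_eq, mem_empty_iff_false, iff_false, not_lt]
        nlinarith [sq_nonneg b]
      rw [this, Set.indicator_empty, integral_zero]
  simp only [inner, integral_zero]


lemma slice1_eq (hα : 0 < α) (b : ℝ) (h : 0 < 1 - b ^ 2) :
    {a : ℝ | α * a ^ 2 + b ^ 2 < 1}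
      = Ioo (-Real.sqrt ((1 - b ^ 2) / α)) (Real.sqrt ((1 - b ^ 2) / α)) := by
  have hq : 0 < (1 - b ^ 2) / α := div_pos h hα
  have hc : 0 < Real.sqrt ((1 - b ^ 2) / α) := Real.sqrt_pos.2 hq
  have hc2 : Real.sqrt ((1 - b ^ 2) / α) ^ 2 = (1 - b ^ 2) / α := Real.sq_sqrt hq.le
  have hc3 : α * Real.sqrt ((1 - b ^ 2) / α) ^ 2 = 1 - b ^ 2 := by
    rw [hc2]; field_simp
  ext a
  simp only [mem_setOf_eq, mem_Ioo]
  constructor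
  · intro ha
    have haa : a ^ 2 < Real.sqrt ((1 - b ^ 2) / α) ^ 2 :=
      lt_of_mul_lt_mul_left (by nlinarith) hα.le
    constructor <;> nlinarith [sq_nonneg (a - Real.sqrt ((1 - b ^ 2) / α)),
      sq_nonneg (a + Real.sqrt ((1 - b ^ 2) / α))]
  · rintro ⟨h1, h2⟩
    have h3 := mul_pos (sub_pos.2 h2) (by linarith : 0 < Real.sqrt ((1 - b ^ 2) / α) + a)
    nlinarith [mul_pos hα (by nlinarith : (0:ℝ) < Real.sqrt ((1 - b ^ 2) / α) ^ 2 - a ^ 2)]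

lemma integral_pd1_zero (hα : 0 < α) {F : ℝ × ℝ → ℝ} (hF : ContDiff ℝ (⊤ : ℕ∞) F)
    (hb : ∀ x : ℝ × ℝ, α * x.1 ^ 2 + x.2 ^ 2 = 1 → F x = 0) :
    ∫ x in {x : ℝ × ℝ | α * x.1 ^ 2 + x.2 ^ 2 < 1}, pd1 F x = 0 := by
  set M := {x : ℝ × ℝ | α * x.1 ^ 2 + x.2 ^ 2 < 1} with hMdef
  have hMm : MeasurableSet M := ellipseMeasurable α
  have hg : Continuous (pd1 F) := (contDiff_pd1 hF).continuous
  have hint : Integrable (M.indicator (pd1 F)) volume :=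
    (integrable_indicator_iff hMm).2 (integrableOn_ellipse hα hg)
  rw [← integral_indicator hMm]
  rw [Measure.volume_eq_prod]
  rw [Measure.volume_eq_prod] at hint
  rw [integral_prod_symm _ hint]
  have inner : ∀ b : ℝ, ∫ a : ℝ, M.indicator (pd1 F) (a, b) = 0 := by
    intro b
    have hrw : (fun a : ℝ => M.indicator (pd1 F) (a, b))
        = Set.indicator {a : ℝ | α * a ^ 2 + b ^ 2 < 1} (fun a => pd1 F (a, b)) := by
      funext a
      by_cases hm : α * a ^ 2 + b ^ 2 < 1
      · simp [hMdef, Set.indicator, hm]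
      · simp [hMdef, Set.indicator, hm]
    rw [hrw]
    by_cases hcase : 0 < 1 - b ^ 2
    · set c := Real.sqrt ((1 - b ^ 2) / α) with hcdef
      have hq : 0 < (1 - b ^ 2) / α := div_pos hcase hα
      have hc : 0 < c := Real.sqrt_pos.2 hq
      have hc2 : c ^ 2 = (1 - b ^ 2) / α := Real.sq_sqrt hq.le
      have hc3 : α * c ^ 2 = 1 - b ^ 2 := by rw [hc2]; field_simp
      rw [slice1_eq hα b hcase, integral_indicator measurableSet_Ioo]
      have hderiv : (fun a : ℝ => pd1 F (a, b)) = deriv (fun s => F (s, b)) := by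
        funext a; rfl
      have hdiff : ∀ y ∈ Set.uIcc (-c) c, DifferentiableAt ℝ (fun s => F (s, b)) y :=
        fun y _ => (hasDerivAt_slice1 hF y b).differentiableAt
      have hcont : IntervalIntegrable (deriv fun s => F (s, b)) volume (-c) c := by
        rw [← hderiv]
        exact (hg.comp (continuous_id.prodMk continuous_const)).intervalIntegrable _ _
      have hftc := intervalIntegral.integral_deriv_eq_sub hdiff hcont
      rw [intervalIntegral.integral_of_le (by linarith : -c ≤ c),
        integral_Ioc_eq_integral_Ioo] at hftc
      rw [hderiv, hftc, hb (c, b) (by simp; nlinarith), hb (-c, b) (by simp; nlinarith)]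
      ring
    · have : {a : ℝ | α * a ^ 2 + b ^ 2 < 1} = (∅ : Set ℝ) := by
        ext a; simp only [mem_setOf_eq, mem_empty_iff_false, iff_false, not_lt]
        nlinarith [sq_nonneg a, mul_nonneg hα.le (sq_nonneg a)]
      rw [this, Set.indicator_empty, integral_zero]
  simp only [inner, integral_zero]

end Div

section Ptw
variable {α ω₀ ν : ℝ}

lemma pd1_sub_const (g : ℝ × ℝ → ℝ) (c : ℝ) (x : ℝ × ℝ) :
    pd1 (fun y => g y - c) x = pd1 g x := by
  simp only [pd1]; exact deriv_sub_const c

lemma pd2_sub_const (g : ℝ × ℝ → ℝ) (c : ℝ) (x : ℝ × ℝ) :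
    pd2 (fun y => g y - c) x = pd2 g x := by
  simp only [pd2]; exact deriv_sub_const c

lemma pd1_add_const (g : ℝ × ℝ → ℝ) (c : ℝ) (x : ℝ × ℝ) :
    pd1 (fun y => g y + c) x = pd1 g x := by
  simp only [pd1]; exact deriv_add_const c

lemma pd2_add_const (g : ℝ × ℝ → ℝ) (c : ℝ) (x : ℝ × ℝ) :
    pd2 (fun y => g y + c) x = pd2 g x := by
  simp only [pd2]; exact deriv_add_const c

lemma pointwise_identity
    (α ω₀ ν : ℝ)
    (f1 f2 P : ℝ × ℝ → ℝ)
    (hf1 : ContDiff ℝ (⊤ : ℕ∞) f1) (hf2 : ContDiff ℝ (⊤ : ℕ∞) f2) (hP : ContDiff ℝ (⊤ : ℕ∞) P)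
    (w1 w2 F1 F2 : ℝ × ℝ → ℝ)
    (hw1 : w1 = fun y => f1 y - ω₀ * (-y.2))
    (hw2 : w2 = fun y => f2 y - ω₀ * (α * y.1))
    (hF1 : F1 = fun y => 2 * (-(((w1 y ^ 2 + w2 y ^ 2) / 2) * f1 y)
      - (P y - ω₀ ^ 2 * α * (y.1 ^ 2 + y.2 ^ 2) / 2) * w1 y
      + ν * (w1 y * pd1 w1 y + w2 y * pd1 w2 y)))
    (hF2 : F2 = fun y => 2 * (-(((w1 y ^ 2 + w2 y ^ 2) / 2) * f2 y)
      - (P y - ω₀ ^ 2 * α * (y.1 ^ 2 + y.2 ^ 2) / 2) * w2 y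
      + ν * (w1 y * pd2 w1 y + w2 y * pd2 w2 y)))
    (x1 x2 : ℝ) (d1 d2 : ℝ)
    (EQ1 : d1 + f1 (x1, x2) * pd1 f1 (x1, x2) + f2 (x1, x2) * pd2 f1 (x1, x2)
      = - pd1 P (x1, x2) + ν * (pd1 (pd1 f1) (x1, x2) + pd2 (pd2 f1) (x1, x2)))
    (EQ2 : d2 + f1 (x1, x2) * pd1 f2 (x1, x2) + f2 (x1, x2) * pd2 f2 (x1, x2)
      = - pd2 P (x1, x2) + ν * (pd1 (pd1 f2) (x1, x2) + pd2 (pd2 f2) (x1, x2)))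
    (hdivx : pd1 f1 (x1, x2) + pd2 f2 (x1, x2) = 0) :
    2 * w1 (x1, x2) * d1 + 2 * w2 (x1, x2) * d2
      = pd1 F1 (x1, x2) + pd2 F2 (x1, x2)
        - 2 * ν * ((pd1 w1 (x1, x2)) ^ 2 + (pd2 w1 (x1, x2)) ^ 2
          + (pd1 w2 (x1, x2)) ^ 2 + (pd2 w2 (x1, x2)) ^ 2)
        - 2 * ω₀ * (α - 1) * (w1 (x1, x2) * w2 (x1, x2)) := by
  have hw1c : ContDiff ℝ (⊤ : ℕ∞) w1 := by
    rw [hw1]; exact hf1.sub (contDiff_const.mul contDiff_snd.neg)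
  have hw2c : ContDiff ℝ (⊤ : ℕ∞) w2 := by
    rw [hw2]; exact hf2.sub (contDiff_const.mul (contDiff_const.mul contDiff_fst))
  -- function-level identities for first derivatives of w
  have hderivneg : ∀ c : ℝ, deriv (fun a : ℝ => ω₀ * -a) c = -ω₀ := by
    intro c; simpa using ((hasDerivAt_id c).neg.const_mul ω₀).deriv
  have hderivlin : ∀ c : ℝ, deriv (fun a : ℝ => ω₀ * (α * a)) c = ω₀ * α := by
    intro c; simpa [mul_comm] using (((hasDerivAt_id c).const_mul α).const_mul ω₀).deriv
  have hpw1 : pd1 w1 = pd1 f1 := by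
    funext y; rw [hw1]; simp only [pd1]; exact deriv_sub_const _
  have hpw2 : pd2 w1 = fun y => pd2 f1 y + ω₀ := by
    funext y; rw [hw1]; simp only [pd2]
    rw [deriv_fun_sub ((hasDerivAt_pd2 hf1 y.1 y.2).differentiableAt)
      (by exact ((hasDerivAt_id y.2).neg.const_mul ω₀).differentiableAt)]
    rw [hderivneg]
    simp [pd2, sub_neg_eq_add]
  have hpw3 : pd1 w2 = fun y => pd1 f2 y - ω₀ * α := by
    funext y; rw [hw2]; simp only [pd1]
    rw [deriv_fun_sub ((hasDerivAt_pd1 hf2 y.1 y.2).differentiableAt)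
      (by exact (((hasDerivAt_id y.1).const_mul α).const_mul ω₀).differentiableAt)]
    rw [hderivlin]
  have hpw4 : pd2 w2 = pd2 f2 := by
    funext y; rw [hw2]; simp only [pd2]; exact deriv_sub_const _
  -- second derivatives
  have hsec1 : pd1 (pd1 w1) (x1, x2) = pd1 (pd1 f1) (x1, x2) := by rw [hpw1]
  have hsec2 : pd2 (pd2 w1) (x1, x2) = pd2 (pd2 f1) (x1, x2) := by
    rw [hpw2, pd2_add_const]
  have hsec3 : pd1 (pd1 w2) (x1, x2) = pd1 (pd1 f2) (x1, x2) := by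
    rw [hpw3, pd1_sub_const]
  have hsec4 : pd2 (pd2 w2) (x1, x2) = pd2 (pd2 f2) (x1, x2) := by rw [hpw4]
  -- slice HasDerivAt facts in direction 1
  have hw1' := hasDerivAt_pd1 hw1c x1 x2
  have hw2' := hasDerivAt_pd1 hw2c x1 x2
  have hf1' := hasDerivAt_pd1 hf1 x1 x2
  have hP1' := hasDerivAt_pd1 hP x1 x2
  have hz11 := hasDerivAt_pd1 (contDiff_pd1 hw1c) x1 x2
  have hz21 := hasDerivAt_pd1 (contDiff_pd1 hw2c) x1 x2
  have hq1' : HasDerivAt (fun s => P (s, x2) - ω₀ ^ 2 * α * (s ^ 2 + x2 ^ 2) / 2)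
      (pd1 P (x1, x2) - ω₀ ^ 2 * α * (2 * x1 ^ 1) / 2) x1 :=
    hP1'.sub ((((hasDerivAt_pow 2 x1).add_const (x2 ^ 2)).const_mul (ω₀ ^ 2 * α)).div_const 2)
  have hφ1' : HasDerivAt (fun s => (w1 (s, x2) ^ 2 + w2 (s, x2) ^ 2) / 2)
      ((2 * w1 (x1, x2) ^ 1 * pd1 w1 (x1, x2) + 2 * w2 (x1, x2) ^ 1 * pd1 w2 (x1, x2)) / 2) x1 :=
    ((hw1'.pow 2).add (hw2'.pow 2)).div_const 2
  have hd1 : pd1 F1 (x1, x2)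
      = 2 * ((-(((2 * w1 (x1, x2) ^ 1 * pd1 w1 (x1, x2) + 2 * w2 (x1, x2) ^ 1 * pd1 w2 (x1, x2)) / 2)
              * f1 (x1, x2) + ((w1 (x1, x2) ^ 2 + w2 (x1, x2) ^ 2) / 2) * pd1 f1 (x1, x2))
          - ((pd1 P (x1, x2) - ω₀ ^ 2 * α * (2 * x1 ^ 1) / 2) * w1 (x1, x2)
              + (P (x1, x2) - ω₀ ^ 2 * α * (x1 ^ 2 + x2 ^ 2) / 2) * pd1 w1 (x1, x2)))
          + ν * ((pd1 w1 (x1, x2) * pd1 w1 (x1, x2) + w1 (x1, x2) * pd1 (pd1 w1) (x1, x2))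
              + (pd1 w2 (x1, x2) * pd1 w2 (x1, x2) + w2 (x1, x2) * pd1 (pd1 w2) (x1, x2)))) := by
    rw [hF1]
    exact ((((hφ1'.mul hf1').neg.sub (hq1'.mul hw1')).add
      (((hw1'.mul hz11).add (hw2'.mul hz21)).const_mul ν)).const_mul 2).deriv
  -- slice HasDerivAt facts in direction 2
  have hw1'' := hasDerivAt_pd2 hw1c x1 x2
  have hw2'' := hasDerivAt_pd2 hw2c x1 x2
  have hf2'' := hasDerivAt_pd2 hf2 x1 x2
  have hP2'' := hasDerivAt_pd2 hP x1 x2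
  have hz12 := hasDerivAt_pd2 (contDiff_pd2 hw1c) x1 x2
  have hz22 := hasDerivAt_pd2 (contDiff_pd2 hw2c) x1 x2
  have hq2'' : HasDerivAt (fun s => P (x1, s) - ω₀ ^ 2 * α * (x1 ^ 2 + s ^ 2) / 2)
      (pd2 P (x1, x2) - ω₀ ^ 2 * α * (2 * x2 ^ 1) / 2) x2 :=
    hP2''.sub ((((hasDerivAt_pow 2 x2).const_add (x1 ^ 2)).const_mul (ω₀ ^ 2 * α)).div_const 2)
  have hφ2'' : HasDerivAt (fun s => (w1 (x1, s) ^ 2 + w2 (x1, s) ^ 2) / 2)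
      ((2 * w1 (x1, x2) ^ 1 * pd2 w1 (x1, x2) + 2 * w2 (x1, x2) ^ 1 * pd2 w2 (x1, x2)) / 2) x2 :=
    ((hw1''.pow 2).add (hw2''.pow 2)).div_const 2
  have hd2 : pd2 F2 (x1, x2)
      = 2 * ((-(((2 * w1 (x1, x2) ^ 1 * pd2 w1 (x1, x2) + 2 * w2 (x1, x2) ^ 1 * pd2 w2 (x1, x2)) / 2)
              * f2 (x1, x2) + ((w1 (x1, x2) ^ 2 + w2 (x1, x2) ^ 2) / 2) * pd2 f2 (x1, x2))
          - ((pd2 P (x1, x2) - ω₀ ^ 2 * α * (2 * x2 ^ 1) / 2) * w2 (x1, x2)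
              + (P (x1, x2) - ω₀ ^ 2 * α * (x1 ^ 2 + x2 ^ 2) / 2) * pd2 w2 (x1, x2)))
          + ν * ((pd2 w1 (x1, x2) * pd2 w1 (x1, x2) + w1 (x1, x2) * pd2 (pd2 w1) (x1, x2))
              + (pd2 w2 (x1, x2) * pd2 w2 (x1, x2) + w2 (x1, x2) * pd2 (pd2 w2) (x1, x2)))) := by
    rw [hF2]
    exact ((((hφ2''.mul hf2'').neg.sub (hq2''.mul hw2'')).add
      (((hw1''.mul hz12).add (hw2''.mul hz22)).const_mul ν)).const_mul 2).deriv
  have hw1x : w1 (x1, x2) = f1 (x1, x2) - ω₀ * (-x2) := by rw [hw1]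
  have hw2x : w2 (x1, x2) = f2 (x1, x2) - ω₀ * (α * x1) := by rw [hw2]
  have e1 : pd1 w1 (x1, x2) = pd1 f1 (x1, x2) := by rw [hpw1]
  have e2 : pd2 w1 (x1, x2) = pd2 f1 (x1, x2) + ω₀ := by rw [hpw2]
  have e3 : pd1 w2 (x1, x2) = pd1 f2 (x1, x2) - ω₀ * α := by rw [hpw3]
  have e4 : pd2 w2 (x1, x2) = pd2 f2 (x1, x2) := by rw [hpw4]
  rw [hd1, hd2, hsec1, hsec2, hsec3, hsec4, e1, e2, e3, e4, hw1x, hw2x]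
  linear_combination (2 * (f1 (x1, x2) - ω₀ * (-x2))) * EQ1
    + (2 * (f2 (x1, x2) - ω₀ * (α * x1))) * EQ2
    + (-( (f1 (x1, x2) - ω₀ * (-x2)) ^ 2 + (f2 (x1, x2) - ω₀ * (α * x1)) ^ 2)
        - 2 * (P (x1, x2) - ω₀ ^ 2 * α * (x1 ^ 2 + x2 ^ 2) / 2)) * hdivx
    + (2 * f1 (x1, x2) ^ 2 + 4 * ω₀ * x2 * f1 (x1, x2) - 4 * ω₀ * α * x1 * f2 (x1, x2)
        + 2 * f2 (x1, x2) ^ 2 + 2 * ω₀ ^ 2 * x2 ^ 2 * (1 - α)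
        + 2 * ω₀ ^ 2 * α * x1 ^ 2 * (α - 1) + 4 * P (x1, x2)) * hdivx

end Ptw

section Key

lemma key_step
    (α ω₀ ν lam1 : ℝ) (hα : 0 < α) (hα1 : α ≤ 1) (hω : 0 < ω₀) (hν : 0 < ν) (hlam : 0 < lam1)
    (hPoincare : ∀ v : ℝ × ℝ → ℝ, ContDiff ℝ (⊤ : ℕ∞) v →
      (∀ x : ℝ × ℝ, α * x.1 ^ 2 + x.2 ^ 2 = 1 → v x = 0) →
      lam1 * ∫ x in {x : ℝ × ℝ | α * x.1 ^ 2 + x.2 ^ 2 < 1}, (v x) ^ 2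
        ≤ ∫ x in {x : ℝ × ℝ | α * x.1 ^ 2 + x.2 ^ 2 < 1}, ((pd1 v x) ^ 2 + (pd2 v x) ^ 2))
    (f1 f2 P d1 d2 G : ℝ × ℝ → ℝ)
    (hf1 : ContDiff ℝ (⊤ : ℕ∞) f1) (hf2 : ContDiff ℝ (⊤ : ℕ∞) f2) (hP : ContDiff ℝ (⊤ : ℕ∞) P)
    (hGc : Continuous G)
    (hG : ∀ x : ℝ × ℝ, G x = 2 * (f1 x - ω₀ * (-x.2)) * d1 x + 2 * (f2 x - ω₀ * (α * x.1)) * d2 x)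
    (hNS1 : ∀ x ∈ {x : ℝ × ℝ | α * x.1 ^ 2 + x.2 ^ 2 < 1},
      d1 x + f1 x * pd1 f1 x + f2 x * pd2 f1 x
        = - pd1 P x + ν * (pd1 (pd1 f1) x + pd2 (pd2 f1) x))
    (hNS2 : ∀ x ∈ {x : ℝ × ℝ | α * x.1 ^ 2 + x.2 ^ 2 < 1},
      d2 x + f1 x * pd1 f2 x + f2 x * pd2 f2 x
        = - pd2 P x + ν * (pd1 (pd1 f2) x + pd2 (pd2 f2) x))
    (hdiv : ∀ x ∈ {x : ℝ × ℝ | α * x.1 ^ 2 + x.2 ^ 2 < 1}, pd1 f1 x + pd2 f2 x = 0)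
    (hbc1 : ∀ x : ℝ × ℝ, α * x.1 ^ 2 + x.2 ^ 2 = 1 → f1 x = ω₀ * (-x.2))
    (hbc2 : ∀ x : ℝ × ℝ, α * x.1 ^ 2 + x.2 ^ 2 = 1 → f2 x = ω₀ * (α * x.1)) :
    ∫ x in {x : ℝ × ℝ | α * x.1 ^ 2 + x.2 ^ 2 < 1}, G x
      ≤ -(2 * (ν * lam1 - ω₀ * (1 - α)))
        * ∫ x in {x : ℝ × ℝ | α * x.1 ^ 2 + x.2 ^ 2 < 1},
            ((f1 x - ω₀ * (-x.2)) ^ 2 + (f2 x - ω₀ * (α * x.1)) ^ 2) := by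
  set Ms := {x : ℝ × ℝ | α * x.1 ^ 2 + x.2 ^ 2 < 1} with hMs
  set w1 : ℝ × ℝ → ℝ := fun y => f1 y - ω₀ * (-y.2) with hw1
  set w2 : ℝ × ℝ → ℝ := fun y => f2 y - ω₀ * (α * y.1) with hw2
  set F1 : ℝ × ℝ → ℝ := fun y => 2 * (-(((w1 y ^ 2 + w2 y ^ 2) / 2) * f1 y)
      - (P y - ω₀ ^ 2 * α * (y.1 ^ 2 + y.2 ^ 2) / 2) * w1 y
      + ν * (w1 y * pd1 w1 y + w2 y * pd1 w2 y)) with hF1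
  set F2 : ℝ × ℝ → ℝ := fun y => 2 * (-(((w1 y ^ 2 + w2 y ^ 2) / 2) * f2 y)
      - (P y - ω₀ ^ 2 * α * (y.1 ^ 2 + y.2 ^ 2) / 2) * w2 y
      + ν * (w1 y * pd2 w1 y + w2 y * pd2 w2 y)) with hF2
  have hw1c : ContDiff ℝ (⊤ : ℕ∞) w1 := hf1.sub (contDiff_const.mul contDiff_snd.neg)
  have hw2c : ContDiff ℝ (⊤ : ℕ∞) w2 := hf2.sub (contDiff_const.mul (contDiff_const.mul contDiff_fst))
  have hQ1 : ContDiff ℝ (⊤ : ℕ∞) (fun y : ℝ × ℝ => ω₀ ^ 2 * α * (y.1 ^ 2 + y.2 ^ 2) / 2) :=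
    (contDiff_const.mul ((contDiff_fst.pow 2).add (contDiff_snd.pow 2))).div_const 2
  have hφc : ContDiff ℝ (⊤ : ℕ∞) (fun y : ℝ × ℝ => (w1 y ^ 2 + w2 y ^ 2) / 2) :=
    ((hw1c.pow 2).add (hw2c.pow 2)).div_const 2
  have hF1c : ContDiff ℝ (⊤ : ℕ∞) F1 :=
    contDiff_const.mul ((((hφc.mul hf1).neg).sub ((hP.sub hQ1).mul hw1c)).add
      (contDiff_const.mul ((hw1c.mul (contDiff_pd1 hw1c)).add (hw2c.mul (contDiff_pd1 hw2c)))))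
  have hF2c : ContDiff ℝ (⊤ : ℕ∞) F2 :=
    contDiff_const.mul ((((hφc.mul hf2).neg).sub ((hP.sub hQ1).mul hw2c)).add
      (contDiff_const.mul ((hw1c.mul (contDiff_pd2 hw1c)).add (hw2c.mul (contDiff_pd2 hw2c)))))
  have hw1b : ∀ x : ℝ × ℝ, α * x.1 ^ 2 + x.2 ^ 2 = 1 → w1 x = 0 := by
    intro x hx; rw [hw1]; simp only; rw [hbc1 x hx]; ring
  have hw2b : ∀ x : ℝ × ℝ, α * x.1 ^ 2 + x.2 ^ 2 = 1 → w2 x = 0 := by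
    intro x hx; rw [hw2]; simp only; rw [hbc2 x hx]; ring
  have hF1b : ∀ x : ℝ × ℝ, α * x.1 ^ 2 + x.2 ^ 2 = 1 → F1 x = 0 := by
    intro x hx; rw [hF1]; simp only; rw [hw1b x hx, hw2b x hx]; ring
  have hF2b : ∀ x : ℝ × ℝ, α * x.1 ^ 2 + x.2 ^ 2 = 1 → F2 x = 0 := by
    intro x hx; rw [hF2]; simp only; rw [hw1b x hx, hw2b x hx]; ring
  -- pointwise identity on Ms
  have hptw : ∀ x ∈ Ms, G x
      = (pd1 F1 x + pd2 F2 x)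
        - (2 * ν * ((pd1 w1 x) ^ 2 + (pd2 w1 x) ^ 2 + (pd1 w2 x) ^ 2 + (pd2 w2 x) ^ 2)
          + 2 * ω₀ * (α - 1) * (w1 x * w2 x)) := by
    rintro ⟨x1, x2⟩ hx
    have hid := pointwise_identity α ω₀ ν f1 f2 P hf1 hf2 hP w1 w2 F1 F2 hw1 hw2 hF1 hF2
      x1 x2 (d1 (x1, x2)) (d2 (x1, x2)) (hNS1 _ hx) (hNS2 _ hx) (hdiv _ hx)
    have hGx := hG (x1, x2)
    have hw1x : w1 (x1, x2) = f1 (x1, x2) - ω₀ * (-x2) := by rw [hw1]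
    have hw2x : w2 (x1, x2) = f2 (x1, x2) - ω₀ * (α * x1) := by rw [hw2]
    rw [hGx, ← hw1x, ← hw2x]
    linear_combination hid
  -- integrability
  have intOn : ∀ {g : ℝ × ℝ → ℝ}, Continuous g → IntegrableOn g Ms := fun hg =>
    integrableOn_ellipse hα hg
  have cpd : ∀ {g : ℝ × ℝ → ℝ}, ContDiff ℝ (⊤ : ℕ∞) g → Continuous (pd1 g) := fun hg =>
    (contDiff_pd1 hg).continuous
  have cpd2 : ∀ {g : ℝ × ℝ → ℝ}, ContDiff ℝ (⊤ : ℕ∞) g → Continuous (pd2 g) := fun hg =>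
    (contDiff_pd2 hg).continuous
  have idiv : IntegrableOn (fun x => pd1 F1 x + pd2 F2 x) Ms :=
    intOn ((cpd hF1c).add (cpd2 hF2c))
  have iQ : IntegrableOn (fun x => (pd1 w1 x) ^ 2 + (pd2 w1 x) ^ 2
      + (pd1 w2 x) ^ 2 + (pd2 w2 x) ^ 2) Ms :=
    intOn (((((cpd hw1c).pow 2).add ((cpd2 hw1c).pow 2)).add
      ((cpd hw2c).pow 2)).add ((cpd2 hw2c).pow 2))
  have iW : IntegrableOn (fun x => w1 x * w2 x) Ms :=
    intOn (hw1c.continuous.mul hw2c.continuous)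
  have iRest : IntegrableOn (fun x =>
      2 * ν * ((pd1 w1 x) ^ 2 + (pd2 w1 x) ^ 2 + (pd1 w2 x) ^ 2 + (pd2 w2 x) ^ 2)
        + 2 * ω₀ * (α - 1) * (w1 x * w2 x)) Ms :=
    (iQ.const_mul _).add (iW.const_mul _)
  have hMm : MeasurableSet Ms := ellipseMeasurable α
  -- split the integral
  have hsplit : ∫ x in Ms, G x
      = (∫ x in Ms, (pd1 F1 x + pd2 F2 x))
        - ∫ x in Ms, (2 * ν * ((pd1 w1 x) ^ 2 + (pd2 w1 x) ^ 2 + (pd1 w2 x) ^ 2 + (pd2 w2 x) ^ 2)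
            + 2 * ω₀ * (α - 1) * (w1 x * w2 x)) := by
    rw [setIntegral_congr_fun hMm hptw]
    exact integral_sub idiv iRest
  have hdivzero : ∫ x in Ms, (pd1 F1 x + pd2 F2 x) = 0 := by
    rw [integral_add (intOn (cpd hF1c)) (intOn (cpd2 hF2c))]
    rw [integral_pd1_zero hα hF1c hF1b, integral_pd2_zero hα hF2c hF2b]
    ring
  -- Poincaré
  have hpoin1 := hPoincare w1 hw1c hw1b
  have hpoin2 := hPoincare w2 hw2c hw2b
  have hQsplit : ∫ x in Ms, ((pd1 w1 x) ^ 2 + (pd2 w1 x) ^ 2 + (pd1 w2 x) ^ 2 + (pd2 w2 x) ^ 2)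
      = (∫ x in Ms, ((pd1 w1 x) ^ 2 + (pd2 w1 x) ^ 2))
        + ∫ x in Ms, ((pd1 w2 x) ^ 2 + (pd2 w2 x) ^ 2) := by
    rw [← integral_add (f := fun x => (pd1 w1 x) ^ 2 + (pd2 w1 x) ^ 2)
      (g := fun x => (pd1 w2 x) ^ 2 + (pd2 w2 x) ^ 2) (intOn (((cpd hw1c).pow 2).add ((cpd2 hw1c).pow 2)))
      (intOn (((cpd hw2c).pow 2).add ((cpd2 hw2c).pow 2)))]
    congr 1; funext x; ring
  have hWsplit : ∫ x in Ms, ((w1 x) ^ 2 + (w2 x) ^ 2)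
      = (∫ x in Ms, (w1 x) ^ 2) + ∫ x in Ms, (w2 x) ^ 2 :=
    integral_add (intOn (hw1c.continuous.pow 2)) (intOn (hw2c.continuous.pow 2))
  have hcross : ∫ x in Ms, 2 * (w1 x * w2 x) ≤ ∫ x in Ms, ((w1 x) ^ 2 + (w2 x) ^ 2) := by
    apply integral_mono (iW.const_mul 2)
      (intOn ((hw1c.continuous.pow 2).add (hw2c.continuous.pow 2)))
    intro x
    simp only [Pi.add_apply, Pi.pow_apply]
    nlinarith [sq_nonneg (w1 x - w2 x)]
  have hS1 : (0:ℝ) ≤ ∫ x in Ms, (w1 x) ^ 2 := integral_nonneg fun x => sq_nonneg _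
  have hS2 : (0:ℝ) ≤ ∫ x in Ms, (w2 x) ^ 2 := integral_nonneg fun x => sq_nonneg _
  have hIrest : ∫ x in Ms, (2 * ν * ((pd1 w1 x) ^ 2 + (pd2 w1 x) ^ 2 + (pd1 w2 x) ^ 2
        + (pd2 w2 x) ^ 2) + 2 * ω₀ * (α - 1) * (w1 x * w2 x))
      = 2 * ν * (∫ x in Ms, ((pd1 w1 x) ^ 2 + (pd2 w1 x) ^ 2 + (pd1 w2 x) ^ 2 + (pd2 w2 x) ^ 2))
        + 2 * ω₀ * (α - 1) * ∫ x in Ms, (w1 x * w2 x) := by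
    rw [integral_add (iQ.const_mul _) (iW.const_mul _), integral_const_mul, integral_const_mul]
  have hcross2 : 2 * ∫ x in Ms, (w1 x * w2 x) ≤ ∫ x in Ms, ((w1 x) ^ 2 + (w2 x) ^ 2) := by
    rw [← integral_const_mul]
    exact hcross
  rw [hWsplit] at hcross2
  have hgoal2 : (fun x : ℝ × ℝ => (f1 x - ω₀ * (-x.2)) ^ 2 + (f2 x - ω₀ * (α * x.1)) ^ 2)
      = fun x => (w1 x) ^ 2 + (w2 x) ^ 2 := rfl
  rw [hsplit, hdivzero, hgoal2, hIrest, hQsplit]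
  have hval : ∫ x in Ms, ((w1 x) ^ 2 + (w2 x) ^ 2)
      = (∫ x in Ms, (w1 x) ^ 2) + ∫ x in Ms, (w2 x) ^ 2 := hWsplit
  rw [hval]
  have h1a : 0 ≤ 1 - α := by linarith
  nlinarith [mul_le_mul_of_nonneg_left hpoin1 (le_of_lt hν),
    mul_le_mul_of_nonneg_left hpoin2 (le_of_lt hν),
    mul_le_mul_of_nonneg_left hcross2 (mul_nonneg hω.le h1a),
    mul_nonneg (mul_nonneg hω.le h1a) (add_nonneg hS1 hS2)]

end Key
section TSlice
variable {G : ℝ × (ℝ × ℝ) → ℝ}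

lemma hasDerivAt_tslice (hG : ContDiff ℝ (⊤ : ℕ∞) G) (t : ℝ) (x : ℝ × ℝ) :
    HasDerivAt (fun s => G (s, x)) ((fderiv ℝ G (t, x)) (1, 0)) t := by
  have h1 : HasDerivAt (fun s : ℝ => (s, x)) ((1 : ℝ), (0 : ℝ × ℝ)) t :=
    (hasDerivAt_id t).prodMk (hasDerivAt_const t x)
  exact ((hG.differentiable (by simp) (t, x)).hasFDerivAt.comp_hasDerivAt t h1)

end TSlice


/-- **Exponential stability of solid-body-type rotation on an ellipse for large viscosity.**
On the elliptical domain `M = {αx₁² + x₂² < 1}` (`0 < α ≤ 1`), with boundary forcing given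
by the constant-vorticity Euler flow `u_sb = ω₀(−x₂, αx₁)`, any smooth Navier–Stokes
solution satisfies the energy decay estimate with rate `νλ₁ − ω₀(1−α)`; in particular for
`ν > ν* = ω₀λ₁⁻¹(1−α)` the flow converges exponentially in `L²` to `u_sb`. -/
theorem ellipse_stability
    (α ω₀ ν lam1 : ℝ) (hα : 0 < α) (hα1 : α ≤ 1) (hω : 0 < ω₀) (hν : 0 < ν)
    (hlam : 0 < lam1)
    (M : Set (ℝ × ℝ)) (hM : M = {x : ℝ × ℝ | α * x.1 ^ 2 + x.2 ^ 2 < 1})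
    (usb : ℝ × ℝ → ℝ × ℝ) (husb : usb = fun x => (ω₀ * (-x.2), ω₀ * (α * x.1)))
    (hPoincare : ∀ v : ℝ × ℝ → ℝ, ContDiff ℝ (⊤ : ℕ∞) v →
      (∀ x : ℝ × ℝ, α * x.1 ^ 2 + x.2 ^ 2 = 1 → v x = 0) →
      lam1 * ∫ x in M, (v x) ^ 2 ≤ ∫ x in M, ((pd1 v x) ^ 2 + (pd2 v x) ^ 2))
    (u : ℝ → ℝ × ℝ → ℝ × ℝ) (p : ℝ → ℝ × ℝ → ℝ)
    (hu : ContDiff ℝ (⊤ : ℕ∞) (fun q : ℝ × (ℝ × ℝ) => u q.1 q.2))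
    (hp : ContDiff ℝ (⊤ : ℕ∞) (fun q : ℝ × (ℝ × ℝ) => p q.1 q.2))
    (hNS1 : ∀ t ≥ (0:ℝ), ∀ x ∈ M,
      deriv (fun s => (u s x).1) t
        + (u t x).1 * pd1 (fun y => (u t y).1) x + (u t x).2 * pd2 (fun y => (u t y).1) x
      = - pd1 (p t) x + ν * lap (fun y => (u t y).1) x)
    (hNS2 : ∀ t ≥ (0:ℝ), ∀ x ∈ M,
      deriv (fun s => (u s x).2) t
        + (u t x).1 * pd1 (fun y => (u t y).2) x + (u t x).2 * pd2 (fun y => (u t y).2) x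
      = - pd2 (p t) x + ν * lap (fun y => (u t y).2) x)
    (hdiv : ∀ t ≥ (0:ℝ), ∀ x ∈ M,
      pd1 (fun y => (u t y).1) x + pd2 (fun y => (u t y).2) x = 0)
    (hbc : ∀ t ≥ (0:ℝ), ∀ x : ℝ × ℝ, α * x.1 ^ 2 + x.2 ^ 2 = 1 → u t x = usb x) :
    (∀ t ≥ (0:ℝ),
      Real.sqrt (∫ x in M, (((u t x).1 - (usb x).1) ^ 2 + ((u t x).2 - (usb x).2) ^ 2))
        ≤ Real.sqrt (∫ x in M, (((u 0 x).1 - (usb x).1) ^ 2 + ((u 0 x).2 - (usb x).2) ^ 2))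
          * Real.exp (-(ν * lam1 - ω₀ * (1 - α)) * t))
    ∧ (ν > ω₀ * lam1⁻¹ * (1 - α) →
      Tendsto (fun t : ℝ =>
          Real.sqrt (∫ x in M, (((u t x).1 - (usb x).1) ^ 2 + ((u t x).2 - (usb x).2) ^ 2)))
        atTop (nhds 0)) := by
  subst hM husb
  have hU1 : ContDiff ℝ (⊤ : ℕ∞) (fun q : ℝ × (ℝ × ℝ) => (u q.1 q.2).1) := contDiff_fst.comp hu
  have hU2 : ContDiff ℝ (⊤ : ℕ∞) (fun q : ℝ × (ℝ × ℝ) => (u q.1 q.2).2) := contDiff_snd.comp hu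
  set Ms := {x : ℝ × ℝ | α * x.1 ^ 2 + x.2 ^ 2 < 1} with hMsdef
  have hMm : MeasurableSet Ms := ellipseMeasurable α
  set Φ : ℝ × (ℝ × ℝ) → ℝ := fun q =>
    ((u q.1 q.2).1 - ω₀ * (-q.2.2)) ^ 2 + ((u q.1 q.2).2 - ω₀ * (α * q.2.1)) ^ 2 with hΦ
  have hΦc : ContDiff ℝ (⊤ : ℕ∞) Φ := by
    apply ContDiff.add
    · exact (hU1.sub (contDiff_const.mul (contDiff_snd.comp contDiff_snd).neg)).pow 2
    · exact (hU2.sub (contDiff_const.mul (contDiff_const.mul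
        (contDiff_fst.comp contDiff_snd)))).pow 2
  set E : ℝ → ℝ := fun t => ∫ x in Ms, Φ (t, x) with hE
  have hEeq : ∀ t : ℝ,
      (∫ x in Ms, (((u t x).1 - ω₀ * (-x.2)) ^ 2 + ((u t x).2 - ω₀ * (α * x.1)) ^ 2)) = E t :=
    fun t => rfl
  set DΦ : ℝ × (ℝ × ℝ) → ℝ := fun q => (fderiv ℝ Φ q) (1, (0 : ℝ × ℝ)) with hDΦ
  have hDΦc : Continuous DΦ := (((hΦc.fderiv_right (m := (⊤ : ℕ∞)) (by simp))).clm_apply contDiff_const).continuous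
  -- differentiation under the integral sign
  have hEd : ∀ t0 : ℝ, HasDerivAt E (∫ x in Ms, DΦ (t0, x)) t0 := by
    intro t0
    obtain ⟨C, hC⟩ := IsCompact.exists_bound_of_continuousOn
      ((isCompact_Icc (a := t0 - 1) (b := t0 + 1)).prod (ellipseCompactClosure hα))
      hDΦc.continuousOn
    have key := hasDerivAt_integral_of_dominated_loc_of_deriv_le
      (μ := volume.restrict Ms) (F := fun t x => Φ (t, x)) (F' := fun t x => DΦ (t, x))
      (x₀ := t0) (bound := fun _ => C) (s := Metric.ball t0 1) (Metric.ball_mem_nhds t0 one_pos)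
      (Eventually.of_forall fun t =>
        ((hΦc.continuous.comp (Continuous.prodMk_right t)).aestronglyMeasurable))
      (integrableOn_ellipse hα (hΦc.continuous.comp (Continuous.prodMk_right t0)))
      ((hDΦc.comp (Continuous.prodMk_right t0)).aestronglyMeasurable)
      ?_ (integrableOn_ellipse hα continuous_const) ?_
    · exact key.2
    · filter_upwards [ae_restrict_mem hMm] with x hx
      intro t ht
      apply hC (t, x)
      constructor
      · rw [Metric.mem_ball, Real.dist_eq] at ht
        have := abs_lt.1 ht
        exact mem_Icc.2 ⟨by linarith [this.1], by linarith [this.2]⟩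
      · exact subset_closure hx
    · refine Eventually.of_forall fun x t _ => ?_
      exact hasDerivAt_tslice hΦc t x
  -- key differential inequality
  have hExpand : ∀ (t : ℝ) (x : ℝ × ℝ), DΦ (t, x)
      = 2 * ((u t x).1 - ω₀ * (-x.2)) * deriv (fun s => (u s x).1) t
        + 2 * ((u t x).2 - ω₀ * (α * x.1)) * deriv (fun s => (u s x).2) t := by
    intro t x
    have hd1 : HasDerivAt (fun s => (u s x).1) (deriv (fun s => (u s x).1) t) t :=
      (((hU1.comp (contDiff_id.prodMk contDiff_const)).differentiable (by simp) t)).hasDerivAt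
    have hd2 : HasDerivAt (fun s => (u s x).2) (deriv (fun s => (u s x).2) t) t :=
      (((hU2.comp (contDiff_id.prodMk contDiff_const)).differentiable (by simp) t)).hasDerivAt
    have hcomb := ((hd1.sub_const (ω₀ * (-x.2))).pow 2).add ((hd2.sub_const (ω₀ * (α * x.1))).pow 2)
    have habs : HasDerivAt (fun s => Φ (s, x)) (DΦ (t, x)) t := hasDerivAt_tslice hΦc t x
    have := habs.unique hcomb
    rw [this]; ring
  have hkey : ∀ t : ℝ, 0 ≤ t →
      (∫ x in Ms, DΦ (t, x)) ≤ -(2 * (ν * lam1 - ω₀ * (1 - α))) * E t := by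
    intro t ht
    have hres := key_step α ω₀ ν lam1 hα hα1 hω hν hlam hPoincare
      (fun y => (u t y).1) (fun y => (u t y).2) (p t)
      (fun x => deriv (fun s => (u s x).1) t) (fun x => deriv (fun s => (u s x).2) t)
      (fun x => DΦ (t, x))
      (hU1.comp (contDiff_const.prodMk contDiff_id))
      (hU2.comp (contDiff_const.prodMk contDiff_id))
      (hp.comp (contDiff_const.prodMk contDiff_id))
      (hDΦc.comp (Continuous.prodMk_right t))
      (fun x => hExpand t x)
      (fun x hx => by have := hNS1 t ht x hx; simpa [lap] using this)
      (fun x hx => by have := hNS2 t ht x hx; simpa [lap] using this)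
      (fun x hx => hdiv t ht x hx)
      (fun x hx => by have := hbc t ht x hx; exact (Prod.ext_iff.1 this).1)
      (fun x hx => by have := hbc t ht x hx; exact (Prod.ext_iff.1 this).2)
    exact hres
  -- Gronwall argument
  set c : ℝ := 2 * (ν * lam1 - ω₀ * (1 - α)) with hc
  have hgd : ∀ t : ℝ, HasDerivAt (fun s => E s * Real.exp (c * s))
      ((∫ x in Ms, DΦ (t, x)) * Real.exp (c * t) + E t * (Real.exp (c * t) * (c * 1))) t := by
    intro t
    exact (hEd t).mul ((Real.hasDerivAt_exp (c * t)).comp t ((hasDerivAt_id t).const_mul c))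
  have hanti : AntitoneOn (fun s => E s * Real.exp (c * s)) (Ici 0) := by
    apply antitoneOn_of_deriv_nonpos (convex_Ici 0)
    · exact (Differentiable.continuous fun t => (hgd t).differentiableAt).continuousOn
    · exact fun t _ => (hgd t).differentiableAt.differentiableWithinAt
    · intro t htint
      rw [interior_Ici] at htint
      rw [(hgd t).deriv]
      have h1 := hkey t (le_of_lt htint)
      have he := Real.exp_pos (c * t)
      nlinarith [mul_le_mul_of_nonneg_right h1 he.le]
  have hdecay : ∀ t : ℝ, 0 ≤ t → E t ≤ E 0 * Real.exp (-(c * t)) := by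
    intro t ht
    have h1 := hanti (self_mem_Ici) (mem_Ici.2 ht) ht
    simp only [mul_zero, Real.exp_zero, mul_one] at h1
    have h2 : E t = (E t * Real.exp (c * t)) * Real.exp (-(c * t)) := by
      rw [mul_assoc, ← Real.exp_add]; simp
    rw [h2]
    exact mul_le_mul_of_nonneg_right h1 (Real.exp_nonneg _)
  have hEnn : ∀ t : ℝ, 0 ≤ E t := fun t => integral_nonneg fun x => by positivity
  have hpart1 : ∀ t ≥ (0:ℝ),
      Real.sqrt (E t) ≤ Real.sqrt (E 0) * Real.exp (-(ν * lam1 - ω₀ * (1 - α)) * t) := by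
    intro t ht
    have h1 : Real.sqrt (E t) ≤ Real.sqrt (E 0 * Real.exp (-(c * t))) :=
      Real.sqrt_le_sqrt (hdecay t ht)
    have h2 : Real.sqrt (E 0 * Real.exp (-(c * t)))
        = Real.sqrt (E 0) * Real.sqrt (Real.exp (-(c * t))) := Real.sqrt_mul (hEnn 0) _
    have h3 : Real.exp (-(c * t)) = (Real.exp (-(ν * lam1 - ω₀ * (1 - α)) * t)) ^ 2 := by
      rw [sq, ← Real.exp_add]; congr 1; rw [hc]; ring
    have h4 : Real.sqrt (Real.exp (-(c * t))) = Real.exp (-(ν * lam1 - ω₀ * (1 - α)) * t) := by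
      rw [h3, Real.sqrt_sq (Real.exp_nonneg _)]
    calc Real.sqrt (E t) ≤ _ := h1
      _ = _ := by rw [h2, h4]
  have hgoalrw : ∀ t : ℝ,
      (∫ x in Ms, (((u t x).1 - ((fun x : ℝ × ℝ => (ω₀ * (-x.2), ω₀ * (α * x.1))) x).1) ^ 2
        + ((u t x).2 - ((fun x : ℝ × ℝ => (ω₀ * (-x.2), ω₀ * (α * x.1))) x).2) ^ 2)) = E t :=
    fun t => rfl
  constructor
  · intro t ht
    have := hpart1 t ht
    simpa only [hgoalrw] using this
  · intro hν2
    have hinv : lam1⁻¹ * lam1 = 1 := inv_mul_cancel₀ (ne_of_gt hlam)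
    have hr : 0 < ν * lam1 - ω₀ * (1 - α) := by
      have h3 := mul_lt_mul_of_pos_right hν2 hlam
      rw [show ω₀ * lam1⁻¹ * (1 - α) * lam1 = ω₀ * (1 - α) * (lam1⁻¹ * lam1) by ring,
        hinv, mul_one] at h3
      linarith
    have hup : Tendsto (fun t : ℝ => Real.sqrt (E 0)
        * Real.exp (-(ν * lam1 - ω₀ * (1 - α)) * t)) atTop (nhds 0) := by
      have h1 : Tendsto (fun t : ℝ => (ν * lam1 - ω₀ * (1 - α)) * t) atTop atTop :=
        Tendsto.const_mul_atTop hr tendsto_id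
      have h2 : Tendsto (fun t : ℝ => Real.exp (-(ν * lam1 - ω₀ * (1 - α)) * t))
          atTop (nhds 0) := by
        exact (Real.tendsto_exp_neg_atTop_nhds_zero.comp h1).congr
          fun t => by simp only [Function.comp]; ring_nf
      simpa using h2.const_mul (Real.sqrt (E 0))
    apply tendsto_of_tendsto_of_tendsto_of_le_of_le' tendsto_const_nhds hup
    · exact Eventually.of_forall fun t => by
        simp only [hgoalrw]; exact Real.sqrt_nonneg _
    · filter_upwards [eventually_ge_atTop (0:ℝ)] with t ht
      have := hpart1 t ht
      simpa only [hgoalrw] using this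
end

section
/- Let L > 0 and let q_e : 𝕋_L → ℝ be smooth with q_e > 0. There exist constants ε₀ ∈ (0,1) and C > 0, depending only on q_e and L, such that the following holds for all 0 < ε < ε₀. Let ω ∈ [1/2, 2] and let Q be a smooth function on 𝕋_L × [0,∞) with ‖Q‖_{X_{2,50}} ≤ ε^{0.99}. Define f(Q,s;ω) := (1 − ω q_e(s)/√(ω² q_e(s)² + Q)) ∂_s Q (note ω² q_e² + Q > 0 for ε₀ small since ‖Q‖_{L∞} ≲ ‖Q‖_{X_{1,0}} ≤ ε^{0.99}). Then | (1/(ωε)) · ( ∫₀^∞ y ∫₀^L f(Q(s,y), s; ω) ds dy ) / ( (1/L)∫₀^L q_e(s)³ ds ) | ≤ ε^{0.97}. -/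
open MeasureTheory Set Function Filter

/-- `k`-th partial derivative in the tangential variable `s` of a function on
`𝕋_L × [0,∞)` (represented as a curried function `ℝ → ℝ → ℝ`). -/
noncomputable def dS (k : ℕ) (h : ℝ → ℝ → ℝ) : ℝ → ℝ → ℝ :=
  fun s ψ => iteratedDeriv k (fun s' => h s' ψ) s

/-- `j`-th partial derivative in the normal (von Mises) variable `ψ`. -/
noncomputable def dPsi (j : ℕ) (h : ℝ → ℝ → ℝ) : ℝ → ℝ → ℝ :=
  fun s ψ => iteratedDeriv j (fun ψ' => h s ψ') ψ

/-- Squared `L²` norm over `𝕋_L × ℝ₊` (fundamental domain `(0,L] × (0,∞)`). -/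
noncomputable def L2sq (L : ℝ) (h : ℝ → ℝ → ℝ) : ℝ :=
  ∫ p in Ioc (0:ℝ) L ×ˢ Ioi (0:ℝ), (h p.1 p.2) ^ 2

/-- Square-integrability over `𝕋_L × ℝ₊`. -/
def FiniteL2 (L : ℝ) (h : ℝ → ℝ → ℝ) : Prop :=
  IntegrableOn (fun p : ℝ × ℝ => (h p.1 p.2) ^ 2) (Ioc (0:ℝ) L ×ˢ Ioi (0:ℝ))

/-- The weight `⟨ψ⟩^m h`. -/
noncomputable def wt (m : ℕ) (h : ℝ → ℝ → ℝ) : ℝ → ℝ → ℝ :=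
  fun s ψ => (1 + ψ) ^ m * h s ψ

/-- Squared `X_{k,m}` norm:
`‖h‖²_{X_{k,m}} = Σ_{k'≤k} Σ_{m'≤m} (‖⟨ψ⟩^{m'}∂_s^{k'}h‖² + ‖⟨ψ⟩^{m'}∂_s^{k'+1}h‖²
+ ‖⟨ψ⟩^{m'}∂_ψ∂_s^{k'}h‖² + ‖⟨ψ⟩^{m'}∂_ψ²∂_s^{k'}h‖²)`. -/
noncomputable def XnormSq (L : ℝ) (k m : ℕ) (h : ℝ → ℝ → ℝ) : ℝ :=
  ∑ k' ∈ Finset.range (k+1), ∑ m' ∈ Finset.range (m+1),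
    (L2sq L (wt m' (dS k' h)) + L2sq L (wt m' (dS (k'+1) h))
      + L2sq L (wt m' (dPsi 1 (dS k' h))) + L2sq L (wt m' (dPsi 2 (dS k' h))))

/-- The `X_{k,m}` norm. -/
noncomputable def Xnorm (L : ℝ) (k m : ℕ) (h : ℝ → ℝ → ℝ) : ℝ :=
  Real.sqrt (XnormSq L k m h)

/-- Membership in the space `X_{k,m}`: all the defining integrands are integrable. -/
def XFinite (L : ℝ) (k m : ℕ) (h : ℝ → ℝ → ℝ) : Prop :=
  ∀ k' ≤ k, ∀ m' ≤ m,
    FiniteL2 L (wt m' (dS k' h)) ∧ FiniteL2 L (wt m' (dS (k'+1) h))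
      ∧ FiniteL2 L (wt m' (dPsi 1 (dS k' h))) ∧ FiniteL2 L (wt m' (dPsi 2 (dS k' h)))

/-- Joint smoothness of a curried function of two real variables. -/
def Smooth2 (h : ℝ → ℝ → ℝ) : Prop :=
  ContDiff ℝ (⊤ : ℕ∞) (fun p : ℝ × ℝ => h p.1 p.2)

/-- Periodicity in the first (tangential) variable. -/
def PeriodicS (L : ℝ) (h : ℝ → ℝ → ℝ) : Prop :=
  ∀ ψ : ℝ, Function.Periodic (fun s => h s ψ) L

/-- Squared `H^n` norm of a function on `𝕋_L`. -/
noncomputable def HnormSq (L : ℝ) (n : ℕ) (b : ℝ → ℝ) : ℝ :=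
  ∑ j ∈ Finset.range (n+1), ∫ s in (0:ℝ)..L, (iteratedDeriv j b s) ^ 2

/-! ### Auxiliary lemmas -/

section Aux

lemma smooth2_left {h : ℝ → ℝ → ℝ} (hh : Smooth2 h) (ψ : ℝ) :
    ContDiff ℝ (⊤ : ℕ∞) (fun s => h s ψ) := by
  have : (fun s => h s ψ) = (fun p : ℝ × ℝ => h p.1 p.2) ∘ (fun s => (s, ψ)) := rfl
  rw [this]
  exact hh.comp (contDiff_id.prodMk contDiff_const)

lemma smooth2_right {h : ℝ → ℝ → ℝ} (hh : Smooth2 h) (s : ℝ) :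
    ContDiff ℝ (⊤ : ℕ∞) (fun ψ => h s ψ) := by
  have : (fun ψ => h s ψ) = (fun p : ℝ × ℝ => h p.1 p.2) ∘ (fun ψ => (s, ψ)) := rfl
  rw [this]
  exact hh.comp (contDiff_const.prodMk contDiff_id)

lemma dS_zero (h : ℝ → ℝ → ℝ) : dS 0 h = h := by
  funext s ψ; simp [dS]

lemma dS_one_eq {h : ℝ → ℝ → ℝ} (hh : Smooth2 h) :
    dS 1 h = fun s ψ => fderiv ℝ (fun p : ℝ × ℝ => h p.1 p.2) (s, ψ) (1, 0) := by
  funext s ψ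
  have hd : HasDerivAt (fun s' => h s' ψ)
      (fderiv ℝ (fun p : ℝ × ℝ => h p.1 p.2) (s, ψ) (1, 0)) s := by
    have hF : HasFDerivAt (fun p : ℝ × ℝ => h p.1 p.2)
        (fderiv ℝ (fun p : ℝ × ℝ => h p.1 p.2) (s, ψ)) (s, ψ) :=
      (hh.differentiable (by simp) (s, ψ)).hasFDerivAt
    have hγ : HasDerivAt (fun s' : ℝ => (s', ψ)) ((1 : ℝ), (0 : ℝ)) s :=
      (hasDerivAt_id s).prodMk (hasDerivAt_const s ψ)
    exact hF.comp_hasDerivAt s hγ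
  simp only [dS, iteratedDeriv_one]
  exact hd.deriv

lemma dPsi_one_eq {h : ℝ → ℝ → ℝ} (hh : Smooth2 h) :
    dPsi 1 h = fun s ψ => fderiv ℝ (fun p : ℝ × ℝ => h p.1 p.2) (s, ψ) (0, 1) := by
  funext s ψ
  have hd : HasDerivAt (fun ψ' => h s ψ')
      (fderiv ℝ (fun p : ℝ × ℝ => h p.1 p.2) (s, ψ) (0, 1)) ψ := by
    have hF : HasFDerivAt (fun p : ℝ × ℝ => h p.1 p.2)
        (fderiv ℝ (fun p : ℝ × ℝ => h p.1 p.2) (s, ψ)) (s, ψ) :=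
      (hh.differentiable (by simp) (s, ψ)).hasFDerivAt
    have hγ : HasDerivAt (fun ψ' : ℝ => (s, ψ')) ((0 : ℝ), (1 : ℝ)) ψ :=
      (hasDerivAt_const ψ s).prodMk (hasDerivAt_id ψ)
    exact hF.comp_hasDerivAt ψ hγ
  simp only [dPsi, iteratedDeriv_one]
  exact hd.deriv

lemma smooth2_fderiv_apply {h : ℝ → ℝ → ℝ} (hh : Smooth2 h) (v : ℝ × ℝ) :
    ContDiff ℝ (⊤ : ℕ∞) (fun p : ℝ × ℝ => fderiv ℝ (fun q : ℝ × ℝ => h q.1 q.2) p v) :=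
  (hh.fderiv_right (by simp)).clm_apply contDiff_const

lemma smooth2_dS1 {h : ℝ → ℝ → ℝ} (hh : Smooth2 h) : Smooth2 (dS 1 h) := by
  rw [Smooth2, dS_one_eq hh]; exact smooth2_fderiv_apply hh _

lemma smooth2_dPsi1 {h : ℝ → ℝ → ℝ} (hh : Smooth2 h) : Smooth2 (dPsi 1 h) := by
  rw [Smooth2, dPsi_one_eq hh]; exact smooth2_fderiv_apply hh _

lemma dS1_apply (h : ℝ → ℝ → ℝ) (s ψ : ℝ) :
    dS 1 h s ψ = deriv (fun s' => h s' ψ) s := by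
  simp [dS, iteratedDeriv_one]

lemma dPsi1_apply (h : ℝ → ℝ → ℝ) (s ψ : ℝ) :
    dPsi 1 h s ψ = deriv (fun ψ' => h s ψ') ψ := by
  simp [dPsi, iteratedDeriv_one]

lemma sob1 (g : ℝ → ℝ) (hg : ContDiff ℝ (⊤ : ℕ∞) g) {a ℓ x : ℝ} (hℓ : 0 < ℓ)
    (hx : x ∈ Icc a (a + ℓ)) :
    g x ^ 2 ≤ (1 / ℓ) * (∫ t in a..(a + ℓ), g t ^ 2)
      + ∫ t in a..(a + ℓ), |2 * g t * deriv g t| := by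
  have hab : a ≤ a + ℓ := by linarith
  have hgc : Continuous g := hg.continuous
  have hg' : Continuous (deriv g) := hg.continuous_deriv (by simp)
  have hw : Continuous (fun t => |2 * g t * deriv g t|) :=
    ((continuous_const.mul hgc).mul hg').abs
  obtain ⟨t₀, ht₀, hmin⟩ := isCompact_Icc.exists_isMinOn (nonempty_Icc.2 hab)
    ((hgc.pow 2).continuousOn (s := Icc a (a+ℓ)))
  have hmean : g t₀ ^ 2 ≤ (1 / ℓ) * ∫ t in a..(a + ℓ), g t ^ 2 := by
    have h1 : ∫ t in a..(a + ℓ), g t₀ ^ 2 ≤ ∫ t in a..(a + ℓ), g t ^ 2 :=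
      intervalIntegral.integral_mono_on hab intervalIntegrable_const
        ((hgc.pow 2).intervalIntegrable _ _) (fun t ht => hmin ht)
    rw [intervalIntegral.integral_const, smul_eq_mul] at h1
    have h2 : ℓ * g t₀ ^ 2 ≤ ∫ t in a..(a + ℓ), g t ^ 2 := by
      have he : a + ℓ - a = ℓ := by ring
      rwa [he] at h1
    rw [mul_comm] at h2
    calc g t₀ ^ 2 = (1/ℓ) * (g t₀ ^ 2 * ℓ) := by field_simp
      _ ≤ (1/ℓ) * ∫ t in a..(a + ℓ), g t ^ 2 :=
          mul_le_mul_of_nonneg_left h2 (by positivity)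
  have hftc : g x ^ 2 - g t₀ ^ 2 = ∫ t in t₀..x, 2 * g t * deriv g t := by
    rw [eq_comm]
    apply intervalIntegral.integral_eq_sub_of_hasDerivAt
    · intro t _
      have := ((hg.differentiable (by simp) t).hasDerivAt).fun_pow 2
      simpa [mul_comm, mul_assoc, mul_left_comm] using this
    · exact ((continuous_const.mul hgc).mul hg').intervalIntegrable _ _
  have h3 : |∫ t in t₀..x, 2 * g t * deriv g t|
      ≤ ∫ t in a..(a + ℓ), |2 * g t * deriv g t| := by
    rcases le_total t₀ x with hcd | hcd
    · refine (intervalIntegral.abs_integral_le_integral_abs hcd).trans ?_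
      exact intervalIntegral.integral_mono_interval ht₀.1 hcd hx.2
        (Filter.Eventually.of_forall (fun t => abs_nonneg _)) (hw.intervalIntegrable _ _)
    · rw [intervalIntegral.integral_symm, abs_neg]
      refine (intervalIntegral.abs_integral_le_integral_abs hcd).trans ?_
      exact intervalIntegral.integral_mono_interval hx.1 hcd ht₀.2
        (Filter.Eventually.of_forall (fun t => abs_nonneg _)) (hw.intervalIntegrable _ _)
  linarith [hftc ▸ h3, hftc ▸ (le_abs_self (g x ^ 2 - g t₀ ^ 2))]

lemma sqrt_bound {a P : ℝ} (ha : 0 < a) (hP : |P| ≤ a ^ 2 / 2) :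
    |1 - a / Real.sqrt (a ^ 2 + P)| ≤ 2 * |P| / a ^ 2 := by
  have h1 : a ^ 2 / 2 ≤ a ^ 2 + P := by
    have := (abs_le.1 hP).1; linarith
  have h0 : (0:ℝ) < a ^ 2 + P := lt_of_lt_of_le (by positivity) h1
  set r := Real.sqrt (a ^ 2 + P) with hr
  have hrpos : 0 < r := Real.sqrt_pos.2 h0
  have hr2 : r ^ 2 = a ^ 2 + P := Real.sq_sqrt h0.le
  have hra : a / 2 ≤ r := by nlinarith [hrpos]
  have key : 1 - a / r = P / (r * (r + a)) := by
    field_simp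
    nlinarith [hr2]
  rw [key, abs_div, abs_of_pos (by positivity : (0:ℝ) < r * (r + a)),
    div_le_div_iff₀ (by positivity) (by positivity)]
  calc |P| * a ^ 2 ≤ |P| * (2 * (r * (r + a))) := by
        apply mul_le_mul_of_nonneg_left _ (abs_nonneg _)
        nlinarith
    _ = 2 * |P| * (r * (r + a)) := by ring

lemma L2sq_nonneg (L : ℝ) (h : ℝ → ℝ → ℝ) : 0 ≤ L2sq L h :=
  integral_nonneg fun _ => sq_nonneg _

lemma quad_le_XnormSq (L : ℝ) (k m : ℕ) (h : ℝ → ℝ → ℝ) {k' m' : ℕ}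
    (hk : k' ≤ k) (hm : m' ≤ m) :
    L2sq L (wt m' (dS k' h)) + L2sq L (wt m' (dS (k'+1) h))
      + L2sq L (wt m' (dPsi 1 (dS k' h))) + L2sq L (wt m' (dPsi 2 (dS k' h)))
      ≤ XnormSq L k m h := by
  have hquad : ∀ a b : ℕ, 0 ≤ L2sq L (wt b (dS a h)) + L2sq L (wt b (dS (a+1) h))
      + L2sq L (wt b (dPsi 1 (dS a h))) + L2sq L (wt b (dPsi 2 (dS a h))) := by
    intro a b
    have := L2sq_nonneg L (wt b (dS a h))
    have := L2sq_nonneg L (wt b (dS (a+1) h))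
    have := L2sq_nonneg L (wt b (dPsi 1 (dS a h)))
    have := L2sq_nonneg L (wt b (dPsi 2 (dS a h)))
    linarith
  calc L2sq L (wt m' (dS k' h)) + L2sq L (wt m' (dS (k'+1) h))
        + L2sq L (wt m' (dPsi 1 (dS k' h))) + L2sq L (wt m' (dPsi 2 (dS k' h)))
      ≤ ∑ b ∈ Finset.range (m+1),
          (L2sq L (wt b (dS k' h)) + L2sq L (wt b (dS (k'+1) h))
            + L2sq L (wt b (dPsi 1 (dS k' h))) + L2sq L (wt b (dPsi 2 (dS k' h)))) :=
        Finset.single_le_sum (fun b _ => hquad k' b) (Finset.mem_range.2 (Nat.lt_succ_of_le hm))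
    _ ≤ XnormSq L k m h := by
        apply Finset.single_le_sum (f := fun a => ∑ b ∈ Finset.range (m+1),
          (L2sq L (wt b (dS a h)) + L2sq L (wt b (dS (a+1) h))
            + L2sq L (wt b (dPsi 1 (dS a h))) + L2sq L (wt b (dPsi 2 (dS a h)))))
          (fun a _ => Finset.sum_nonneg (fun b _ => hquad a b))
          (Finset.mem_range.2 (Nat.lt_succ_of_le hk))

lemma wt_zero (h : ℝ → ℝ → ℝ) : wt 0 h = h := by
  funext s ψ; simp [wt]

lemma wt_one_sq (h : ℝ → ℝ → ℝ) (s ψ : ℝ) : (wt 1 h s ψ)^2 = (1+ψ)^2 * (h s ψ)^2 := by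
  simp [wt]; ring

end Aux
section Sup

/-- The integrand controlling the sup norm. -/
noncomputable def HH (Q : ℝ → ℝ → ℝ) : ℝ → ℝ → ℝ := fun σ t =>
  2 * (Q σ t) ^ 2 + (dPsi 1 Q σ t) ^ 2 + 2 * (dS 1 Q σ t) ^ 2 + (dPsi 1 (dS 1 Q) σ t) ^ 2

lemma HH_nonneg (Q : ℝ → ℝ → ℝ) (σ t : ℝ) : 0 ≤ HH Q σ t := by
  unfold HH; positivity

/-- local 1d Sobolev bound in the ψ-direction -/
lemma psi_local (v : ℝ → ℝ → ℝ) (hv : Smooth2 v) (σ y : ℝ) :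
    v σ y ^ 2 ≤ ∫ t in y..(y+1), (2 * v σ t ^ 2 + (dPsi 1 v σ t) ^ 2) := by
  have hg : ContDiff ℝ (⊤ : ℕ∞) (fun t => v σ t) := smooth2_right hv σ
  have h1 := sob1 _ hg (one_pos) (x := y) ⟨le_refl y, by linarith⟩
  have hcv : Continuous fun t => v σ t := hg.continuous
  have hcd : Continuous fun t => dPsi 1 v σ t :=
    (smooth2_right (smooth2_dPsi1 hv) σ).continuous
  have hder : (deriv fun t => v σ t) = fun t => dPsi 1 v σ t := by
    funext t; rw [dPsi1_apply]
  rw [hder] at h1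
  have h2 : ∫ t in y..(y+1), |2 * v σ t * dPsi 1 v σ t|
      ≤ ∫ t in y..(y+1), (v σ t ^ 2 + (dPsi 1 v σ t) ^ 2) := by
    apply intervalIntegral.integral_mono_on (by linarith)
      (((continuous_const.mul hcv).mul hcd).abs.intervalIntegrable _ _)
      (((hcv.pow 2).add (hcd.pow 2)).intervalIntegrable _ _)
    intro t _
    have ha := sq_nonneg (v σ t - dPsi 1 v σ t)
    have hb := sq_nonneg (v σ t + dPsi 1 v σ t)
    simp only [Pi.mul_apply, Pi.add_apply, Pi.pow_apply]
    rw [abs_le]; constructor <;> nlinarith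
  have h3 : ∫ t in y..(y+1), (2 * v σ t ^ 2 + (dPsi 1 v σ t) ^ 2)
      = (∫ t in y..(y+1), v σ t ^ 2)
        + ∫ t in y..(y+1), (v σ t ^ 2 + (dPsi 1 v σ t) ^ 2) := by
    have he : ∀ t : ℝ, 2 * v σ t ^ 2 + (dPsi 1 v σ t) ^ 2
        = v σ t ^ 2 + (v σ t ^ 2 + (dPsi 1 v σ t) ^ 2) := fun t => by ring
    simp_rw [he]
    exact intervalIntegral.integral_add ((hcv.pow 2).intervalIntegrable _ _)
      (((hcv.pow 2).add (hcd.pow 2)).intervalIntegrable _ _)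
  have h4 : (1 / 1 : ℝ) = 1 := by norm_num
  rw [h4, one_mul] at h1
  linarith

variable {L : ℝ} {Q : ℝ → ℝ → ℝ}

lemma HH_cont (hQ : Smooth2 Q) : Continuous (fun p : ℝ × ℝ => HH Q p.1 p.2) := by
  have hQ1 : Smooth2 (dS 1 Q) := smooth2_dS1 hQ
  exact (((continuous_const.mul (hQ.continuous.pow 2)).add
    ((smooth2_dPsi1 hQ).continuous.pow 2)).add
    (continuous_const.mul (hQ1.continuous.pow 2))).add
    ((smooth2_dPsi1 hQ1).continuous.pow 2)

lemma HH_cont_right (hQ : Smooth2 Q) (σ : ℝ) : Continuous (fun t => HH Q σ t) := by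
  have : (fun t => HH Q σ t) = (fun p : ℝ × ℝ => HH Q p.1 p.2) ∘ (fun t => (σ, t)) := rfl
  rw [this]; exact (HH_cont hQ).comp (continuous_const.prodMk continuous_id)

lemma Q_local (hQ : Smooth2 Q) (σ y : ℝ) :
    Q σ y ^ 2 ≤ ∫ t in y..(y+1), HH Q σ t := by
  have hcv : Continuous fun t => Q σ t := (smooth2_right hQ σ).continuous
  have hcd : Continuous fun t => dPsi 1 Q σ t :=
    (smooth2_right (smooth2_dPsi1 hQ) σ).continuous
  refine (psi_local Q hQ σ y).trans ?_
  apply intervalIntegral.integral_mono_on (by linarith)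
    (((continuous_const.mul (hcv.pow 2)).add (hcd.pow 2)).intervalIntegrable _ _)
    ((HH_cont_right hQ σ).intervalIntegrable _ _)
  intro t _
  have h1 := sq_nonneg (dS 1 Q σ t)
  have h2 := sq_nonneg (dPsi 1 (dS 1 Q) σ t)
  unfold HH; simp only [Pi.mul_apply, Pi.add_apply, Pi.pow_apply]; nlinarith

lemma Q1_local (hQ : Smooth2 Q) (σ y : ℝ) :
    dS 1 Q σ y ^ 2 ≤ ∫ t in y..(y+1), HH Q σ t := by
  have hQ1 : Smooth2 (dS 1 Q) := smooth2_dS1 hQ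
  have hcv : Continuous fun t => dS 1 Q σ t := (smooth2_right hQ1 σ).continuous
  have hcd : Continuous fun t => dPsi 1 (dS 1 Q) σ t :=
    (smooth2_right (smooth2_dPsi1 hQ1) σ).continuous
  refine (psi_local (dS 1 Q) hQ1 σ y).trans ?_
  apply intervalIntegral.integral_mono_on (by linarith)
    (((continuous_const.mul (hcv.pow 2)).add (hcd.pow 2)).intervalIntegrable _ _)
    ((HH_cont_right hQ σ).intervalIntegrable _ _)
  intro t _
  have h1 := sq_nonneg (Q σ t)
  have h2 := sq_nonneg (dPsi 1 Q σ t)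
  unfold HH; simp only [Pi.mul_apply, Pi.add_apply, Pi.pow_apply]; nlinarith

lemma sup_bound (hL : 0 < L) (hQ : Smooth2 Q)
    (hHD : IntegrableOn (fun p : ℝ × ℝ => HH Q p.1 p.2) (Ioc (0:ℝ) L ×ˢ Ioi (0:ℝ)))
    {s y : ℝ} (hs : s ∈ Icc 0 L) (hy : 0 < y) :
    Q s y ^ 2 ≤ (1/L + 2) * ∫ p in Ioc (0:ℝ) L ×ˢ Ioi (0:ℝ), HH Q p.1 p.2 := by
  have hQ1 : Smooth2 (dS 1 Q) := smooth2_dS1 hQ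
  have hprodμν : ((volume : Measure ℝ).restrict (Ioc (0:ℝ) L)).prod
        ((volume : Measure ℝ).restrict (Ioc y (y+1)))
      = (volume : Measure (ℝ × ℝ)).restrict (Ioc (0:ℝ) L ×ˢ Ioc y (y+1)) := by
    rw [Measure.prod_restrict, ← Measure.volume_eq_prod]
  have hsub : Ioc (0:ℝ) L ×ˢ Ioc y (y+1) ⊆ Ioc (0:ℝ) L ×ˢ Ioi (0:ℝ) :=
    Set.prod_mono (subset_refl _) (fun t ht => hy.trans ht.1)
  have hHB : Integrable (fun p : ℝ × ℝ => HH Q p.1 p.2)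
      (((volume : Measure ℝ).restrict (Ioc (0:ℝ) L)).prod
        ((volume : Measure ℝ).restrict (Ioc y (y+1)))) := by
    rw [hprodμν]; exact hHD.mono_set hsub
  have heqE : (fun σ => ∫ t in y..(y+1), HH Q σ t)
      = fun σ => ∫ t in Ioc y (y+1), HH Q σ t := by
    funext σ
    rw [intervalIntegral.integral_of_le (by linarith : y ≤ y + 1)]
  have hEint : IntervalIntegrable (fun σ => ∫ t in y..(y+1), HH Q σ t) volume 0 L := by
    rw [intervalIntegrable_iff_integrableOn_Ioc_of_le hL.le, heqE]
    exact hHB.integral_prod_left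
  -- 1d Sobolev in the s-direction
  have hg : ContDiff ℝ (⊤ : ℕ∞) (fun σ => Q σ y) := smooth2_left hQ y
  have h1 := sob1 _ hg hL (x := s) ⟨hs.1, by rw [zero_add]; exact hs.2⟩
  have hder : (deriv fun σ => Q σ y) = fun σ => dS 1 Q σ y := by
    funext σ; rw [dS1_apply]
  rw [hder] at h1
  have hcq : Continuous (fun σ => Q σ y) := hg.continuous
  have hcq1 : Continuous (fun σ => dS 1 Q σ y) := (smooth2_left hQ1 y).continuous
  have h2 : ∫ σ in (0:ℝ)..(0+L), Q σ y ^ 2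
      ≤ ∫ σ in (0:ℝ)..(0+L), ∫ t in y..(y+1), HH Q σ t := by
    apply intervalIntegral.integral_mono_on (by linarith)
      ((hcq.pow 2).intervalIntegrable _ _) (by simpa using hEint)
    exact fun σ _ => Q_local hQ σ y
  have h3 : ∫ σ in (0:ℝ)..(0+L), |2 * Q σ y * dS 1 Q σ y|
      ≤ ∫ σ in (0:ℝ)..(0+L), (2 * ∫ t in y..(y+1), HH Q σ t) := by
    apply intervalIntegral.integral_mono_on (by linarith)
      (((continuous_const.mul hcq).mul hcq1).abs.intervalIntegrable _ _)
      (by simpa using (hEint.const_mul (2:ℝ)))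
    intro σ _
    have ha := Q_local hQ σ y
    have hb := Q1_local hQ σ y
    have hc := sq_nonneg (Q σ y - dS 1 Q σ y)
    have hd := sq_nonneg (Q σ y + dS 1 Q σ y)
    simp only [Pi.mul_apply, Pi.add_apply, Pi.pow_apply]
    rw [abs_le]; constructor <;> nlinarith
  have h3' : ∫ σ in (0:ℝ)..(0+L), (2 * ∫ t in y..(y+1), HH Q σ t)
      = 2 * ∫ σ in (0:ℝ)..(0+L), ∫ t in y..(y+1), HH Q σ t :=
    intervalIntegral.integral_const_mul 2 _
  -- Fubini: iterated integral over box equals set integral over box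
  have hfub : ∫ σ in (0:ℝ)..(0+L), ∫ t in y..(y+1), HH Q σ t
      = ∫ p in Ioc (0:ℝ) L ×ˢ Ioc y (y+1), HH Q p.1 p.2 := by
    rw [show (0:ℝ) + L = L by ring]
    rw [intervalIntegral.integral_of_le hL.le]
    simp_rw [heqE]
    rw [← hprodμν, ← MeasureTheory.integral_integral hHB]
  have hboxle : ∫ p in Ioc (0:ℝ) L ×ˢ Ioc y (y+1), HH Q p.1 p.2
      ≤ ∫ p in Ioc (0:ℝ) L ×ˢ Ioi (0:ℝ), HH Q p.1 p.2 := by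
    apply setIntegral_mono_set hHD
    · exact Filter.Eventually.of_forall (fun p => HH_nonneg Q p.1 p.2)
    · exact Filter.Eventually.of_forall (fun p hp => hsub hp)
  have hEnn : 0 ≤ ∫ σ in (0:ℝ)..(0+L), ∫ t in y..(y+1), HH Q σ t := by
    rw [hfub]
    apply setIntegral_nonneg (measurableSet_Ioc.prod measurableSet_Ioc)
    intro p _; exact HH_nonneg Q p.1 p.2
  have hL' : (0:ℝ) ≤ 1/L := by positivity
  have hfinal : Q s y ^ 2 ≤ (1/L + 2) * ∫ σ in (0:ℝ)..(0+L), ∫ t in y..(y+1), HH Q σ t := by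
    have hmul := mul_le_mul_of_nonneg_left h2 hL'
    have h3'' := h3'.symm ▸ h3
    linarith
  refine hfinal.trans ?_
  apply mul_le_mul_of_nonneg_left _ (by positivity)
  rw [hfub]; exact hboxle

end Sup
section Main

/-- quadratic weighted integrand for the numerator bound -/
noncomputable def KK (Q : ℝ → ℝ → ℝ) : ℝ → ℝ → ℝ := fun σ t =>
  (1 + t) ^ 2 * ((Q σ t) ^ 2 + (dS 1 Q σ t) ^ 2)

lemma XnormSq_nonneg (L : ℝ) (k m : ℕ) (h : ℝ → ℝ → ℝ) : 0 ≤ XnormSq L k m h := by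
  apply Finset.sum_nonneg; intro a _
  apply Finset.sum_nonneg; intro b _
  have h1 := L2sq_nonneg L (wt b (dS a h))
  have h2 := L2sq_nonneg L (wt b (dS (a+1) h))
  have h3 := L2sq_nonneg L (wt b (dPsi 1 (dS a h)))
  have h4 := L2sq_nonneg L (wt b (dPsi 2 (dS a h)))
  linarith


set_option maxHeartbeats 1000000 in
/-- **Bound on the implicit Feynman–Lagerstrom error `ω̄_Err`.**  If `‖Q‖_{X_{2,50}} ≤ ε^{0.99}`
and `ω ∈ [1/2,2]`, then the implicit part of the selection functional is `≤ ε^{0.97}`. -/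
theorem omega_error_estimate
    (L : ℝ) (hL : 0 < L)
    (q_e : ℝ → ℝ) (hqe : ContDiff ℝ (⊤ : ℕ∞) q_e) (hqeper : Function.Periodic q_e L)
    (hqepos : ∀ s, 0 < q_e s) :
    ∃ ε₀ : ℝ, 0 < ε₀ ∧ ε₀ < 1 ∧
      ∀ ε : ℝ, 0 < ε → ε < ε₀ →
      ∀ ω : ℝ, 1/2 ≤ ω → ω ≤ 2 →
      ∀ Q : ℝ → ℝ → ℝ, Smooth2 Q → PeriodicS L Q → XFinite L 2 50 Q →
        Xnorm L 2 50 Q ≤ ε ^ (0.99 : ℝ) →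
        |(1 / (ω * ε)) *
            ((∫ y in Ioi (0:ℝ), y * ∫ s in (0:ℝ)..L,
                (1 - ω * q_e s / Real.sqrt (ω ^ 2 * (q_e s) ^ 2 + Q s y))
                  * dS 1 Q s y)
              / ((1/L) * ∫ s in (0:ℝ)..L, (q_e s) ^ 3))|
          ≤ ε ^ (0.97 : ℝ) := by
  -- minimum of q_e on the period
  obtain ⟨σm, hσm, hminq⟩ := isCompact_Icc.exists_isMinOn (nonempty_Icc.2 hL.le)
    (hqe.continuous.continuousOn (s := Icc 0 L))
  set qm : ℝ := q_e σm with hqmdef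
  have hqm : 0 < qm := hqepos σm
  have hqmle : ∀ σ ∈ Icc (0:ℝ) L, qm ≤ q_e σ := fun σ hσ => hminq hσ
  have h1L : (0:ℝ) < 1/L := one_div_pos.2 hL
  set Csob : ℝ := 6 * (1/L + 2) with hCsobdef
  have hCsob : (0:ℝ) < Csob := by rw [hCsobdef]; linarith
  set C1 : ℝ := 8 / qm ^ 2 with hC1def
  have hC1 : (0:ℝ) < C1 := div_pos (by norm_num) (pow_pos hqm 2)
  set C2 : ℝ := 4 * C1 / qm ^ 3 with hC2def
  have hC2 : (0:ℝ) < C2 := div_pos (by linarith) (pow_pos hqm 3)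
  have hc1pos : (0:ℝ) < qm ^ 4 / (64 * Csob) := div_pos (pow_pos hqm 4) (by linarith)
  have hc2pos : (0:ℝ) < (1/(1+C2)) ^ (100:ℕ) := pow_pos (one_div_pos.2 (by linarith)) _
  refine ⟨min (min (1/2) (qm ^ 4 / (64 * Csob))) ((1/(1+C2)) ^ (100:ℕ)),
    lt_min (lt_min one_half_pos hc1pos) hc2pos,
    lt_of_le_of_lt ((min_le_left _ _).trans (min_le_left _ _)) one_half_lt_one, ?_⟩
  intro ε hε hεlt ω hω1 hω2 Q hQs hQper hXF hXn
  have hεhalf : ε < 1/2 :=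
    lt_of_lt_of_le hεlt ((min_le_left _ _).trans (min_le_left _ _))
  have hε1 : ε ≤ 1 := by linarith
  have hεc1 : ε ≤ qm ^ 4 / (64 * Csob) :=
    le_of_lt (lt_of_lt_of_le hεlt ((min_le_left _ _).trans (min_le_right _ _)))
  have hεc2 : ε ≤ (1/(1+C2)) ^ (100:ℕ) :=
    le_of_lt (lt_of_lt_of_le hεlt (min_le_right _ _))
  set S : ℝ := XnormSq L 2 50 Q with hSdef
  -- the squared norm is at most ε^1.98
  have hS198 : S ≤ ε ^ (1.98:ℝ) := by
    have hnn : 0 ≤ S := XnormSq_nonneg L 2 50 Q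
    have h1 : S = (Xnorm L 2 50 Q) ^ 2 := (Real.sq_sqrt hnn).symm
    have h2 : (Xnorm L 2 50 Q) ^ 2 ≤ (ε ^ (0.99:ℝ)) ^ 2 :=
      pow_le_pow_left₀ (Real.sqrt_nonneg _) hXn 2
    have h3 : (ε ^ (0.99:ℝ)) ^ (2:ℕ) = ε ^ (1.98:ℝ) := by
      rw [← Real.rpow_natCast (ε ^ (0.99:ℝ)) 2, ← Real.rpow_mul hε.le]; norm_num
    rw [h1]; rw [h3] at h2; exact h2
  have hSε : S ≤ ε := by
    refine hS198.trans ?_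
    have := Real.rpow_le_rpow_of_exponent_ge hε hε1 (by norm_num : (1:ℝ) ≤ 1.98)
    rwa [Real.rpow_one] at this
  have hSnn : 0 ≤ S := XnormSq_nonneg L 2 50 Q
  -- integrability facts
  have h00 := hXF 0 (by norm_num) 0 (by norm_num)
  have h10 := hXF 1 (by norm_num) 0 (by norm_num)
  have h01 := hXF 0 (by norm_num) 1 (by norm_num)
  have hfQ : FiniteL2 L Q := by
    have := h00.1; rwa [dS_zero, wt_zero] at this
  have hfQs : FiniteL2 L (dS 1 Q) := by
    have := h00.2.1; rwa [zero_add, wt_zero] at this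
  have hfQpsi : FiniteL2 L (dPsi 1 Q) := by
    have := h00.2.2.1; rwa [dS_zero, wt_zero] at this
  have hfQspsi : FiniteL2 L (dPsi 1 (dS 1 Q)) := by
    have := h10.2.2.1; rwa [wt_zero] at this
  have hfW1Q : FiniteL2 L (wt 1 Q) := by
    have := h01.1; rwa [dS_zero] at this
  have hfW1Qs : FiniteL2 L (wt 1 (dS 1 Q)) := by
    have := h01.2.1; rwa [zero_add] at this
  have hHD : IntegrableOn (fun p : ℝ × ℝ => HH Q p.1 p.2) (Ioc (0:ℝ) L ×ˢ Ioi (0:ℝ)) := by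
    have h1 : IntegrableOn (fun p : ℝ × ℝ => 2 * (Q p.1 p.2) ^ 2 + (dPsi 1 Q p.1 p.2) ^ 2
        + 2 * (dS 1 Q p.1 p.2) ^ 2 + (dPsi 1 (dS 1 Q) p.1 p.2) ^ 2)
        (Ioc (0:ℝ) L ×ˢ Ioi (0:ℝ)) :=
      (((hfQ.const_mul 2).add hfQpsi).add (hfQs.const_mul 2)).add hfQspsi
    exact h1
  have hKD : IntegrableOn (fun p : ℝ × ℝ => KK Q p.1 p.2) (Ioc (0:ℝ) L ×ˢ Ioi (0:ℝ)) := by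
    have heq : (fun p : ℝ × ℝ => KK Q p.1 p.2)
        = fun p : ℝ × ℝ => (wt 1 Q p.1 p.2) ^ 2 + (wt 1 (dS 1 Q) p.1 p.2) ^ 2 := by
      funext p; simp only [KK, wt, pow_one]; ring
    rw [heq]; exact hfW1Q.add hfW1Qs
  -- individual L2sq bounds
  have hle : ∀ k' m' : ℕ, k' ≤ 2 → m' ≤ 50 →
      L2sq L (wt m' (dS k' Q)) ≤ S ∧ L2sq L (wt m' (dS (k'+1) Q)) ≤ S
        ∧ L2sq L (wt m' (dPsi 1 (dS k' Q))) ≤ S := by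
    intro k' m' hk hm
    have hq := quad_le_XnormSq L 2 50 Q hk hm
    have n1 := L2sq_nonneg L (wt m' (dS k' Q))
    have n2 := L2sq_nonneg L (wt m' (dS (k'+1) Q))
    have n3 := L2sq_nonneg L (wt m' (dPsi 1 (dS k' Q)))
    have n4 := L2sq_nonneg L (wt m' (dPsi 2 (dS k' Q)))
    exact ⟨by rw [hSdef]; linarith, by rw [hSdef]; linarith, by rw [hSdef]; linarith⟩
  have e1 : L2sq L Q ≤ S := by
    have := (hle 0 0 (by norm_num) (by norm_num)).1; rwa [dS_zero, wt_zero] at this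
  have e2 : L2sq L (dS 1 Q) ≤ S := by
    have := (hle 0 0 (by norm_num) (by norm_num)).2.1; rwa [zero_add, wt_zero] at this
  have e3 : L2sq L (dPsi 1 Q) ≤ S := by
    have := (hle 0 0 (by norm_num) (by norm_num)).2.2; rwa [dS_zero, wt_zero] at this
  have e4 : L2sq L (dPsi 1 (dS 1 Q)) ≤ S := by
    have := (hle 1 0 (by norm_num) (by norm_num)).2.2; rwa [wt_zero] at this
  have e5 : L2sq L (wt 1 Q) ≤ S := by
    have := (hle 0 1 (by norm_num) (by norm_num)).1; rwa [dS_zero] at this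
  have e6 : L2sq L (wt 1 (dS 1 Q)) ≤ S := by
    have := (hle 0 1 (by norm_num) (by norm_num)).2.1; rwa [zero_add] at this
  -- integral of HH is at most 6 S
  have hIH : ∫ p in Ioc (0:ℝ) L ×ˢ Ioi (0:ℝ), HH Q p.1 p.2 ≤ 6 * S := by
    have hsplit : ∫ p in Ioc (0:ℝ) L ×ˢ Ioi (0:ℝ), HH Q p.1 p.2
        = 2 * (∫ p in Ioc (0:ℝ) L ×ˢ Ioi (0:ℝ), (Q p.1 p.2) ^ 2)
          + (∫ p in Ioc (0:ℝ) L ×ˢ Ioi (0:ℝ), (dPsi 1 Q p.1 p.2) ^ 2)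
          + 2 * (∫ p in Ioc (0:ℝ) L ×ˢ Ioi (0:ℝ), (dS 1 Q p.1 p.2) ^ 2)
          + ∫ p in Ioc (0:ℝ) L ×ˢ Ioi (0:ℝ), (dPsi 1 (dS 1 Q) p.1 p.2) ^ 2 := by
      have t1 : (∫ p in Ioc (0:ℝ) L ×ˢ Ioi (0:ℝ), (2 * (Q p.1 p.2) ^ 2 + (dPsi 1 Q p.1 p.2) ^ 2
            + 2 * (dS 1 Q p.1 p.2) ^ 2 + (dPsi 1 (dS 1 Q) p.1 p.2) ^ 2))
          = (∫ p in Ioc (0:ℝ) L ×ˢ Ioi (0:ℝ), (2 * (Q p.1 p.2) ^ 2 + (dPsi 1 Q p.1 p.2) ^ 2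
            + 2 * (dS 1 Q p.1 p.2) ^ 2))
            + ∫ p in Ioc (0:ℝ) L ×ˢ Ioi (0:ℝ), (dPsi 1 (dS 1 Q) p.1 p.2) ^ 2 :=
        integral_add (((hfQ.const_mul 2).add hfQpsi).add (hfQs.const_mul 2)) hfQspsi
      have t2 : (∫ p in Ioc (0:ℝ) L ×ˢ Ioi (0:ℝ), (2 * (Q p.1 p.2) ^ 2 + (dPsi 1 Q p.1 p.2) ^ 2
            + 2 * (dS 1 Q p.1 p.2) ^ 2))
          = (∫ p in Ioc (0:ℝ) L ×ˢ Ioi (0:ℝ), (2 * (Q p.1 p.2) ^ 2 + (dPsi 1 Q p.1 p.2) ^ 2))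
            + ∫ p in Ioc (0:ℝ) L ×ˢ Ioi (0:ℝ), 2 * (dS 1 Q p.1 p.2) ^ 2 :=
        integral_add ((hfQ.const_mul 2).add hfQpsi) (hfQs.const_mul 2)
      have t3 : (∫ p in Ioc (0:ℝ) L ×ˢ Ioi (0:ℝ), (2 * (Q p.1 p.2) ^ 2 + (dPsi 1 Q p.1 p.2) ^ 2))
          = (∫ p in Ioc (0:ℝ) L ×ˢ Ioi (0:ℝ), 2 * (Q p.1 p.2) ^ 2)
            + ∫ p in Ioc (0:ℝ) L ×ˢ Ioi (0:ℝ), (dPsi 1 Q p.1 p.2) ^ 2 :=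
        integral_add (hfQ.const_mul 2) hfQpsi
      have t4 : (∫ p in Ioc (0:ℝ) L ×ˢ Ioi (0:ℝ), 2 * (Q p.1 p.2) ^ 2)
          = 2 * ∫ p in Ioc (0:ℝ) L ×ˢ Ioi (0:ℝ), (Q p.1 p.2) ^ 2 := integral_const_mul 2 _
      have t5 : (∫ p in Ioc (0:ℝ) L ×ˢ Ioi (0:ℝ), 2 * (dS 1 Q p.1 p.2) ^ 2)
          = 2 * ∫ p in Ioc (0:ℝ) L ×ˢ Ioi (0:ℝ), (dS 1 Q p.1 p.2) ^ 2 := integral_const_mul 2 _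
      unfold HH
      rw [t1, t2, t3, t4, t5]
    have g1 : ∫ p in Ioc (0:ℝ) L ×ˢ Ioi (0:ℝ), (Q p.1 p.2) ^ 2 ≤ S := e1
    have g2 : ∫ p in Ioc (0:ℝ) L ×ˢ Ioi (0:ℝ), (dPsi 1 Q p.1 p.2) ^ 2 ≤ S := e3
    have g3 : ∫ p in Ioc (0:ℝ) L ×ˢ Ioi (0:ℝ), (dS 1 Q p.1 p.2) ^ 2 ≤ S := e2
    have g4 : ∫ p in Ioc (0:ℝ) L ×ˢ Ioi (0:ℝ), (dPsi 1 (dS 1 Q) p.1 p.2) ^ 2 ≤ S := e4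
    rw [hsplit]; linarith
  -- sup bound on Q
  have hsup : ∀ σ ∈ Icc (0:ℝ) L, ∀ y : ℝ, 0 < y → |Q σ y| ≤ qm ^ 2 / 8 := by
    intro σ hσ y hy
    have h1 := sup_bound hL hQs hHD hσ hy
    have h2 : Q σ y ^ 2 ≤ (1/L + 2) * (6 * S) :=
      h1.trans (mul_le_mul_of_nonneg_left hIH (by linarith))
    have h3 : (1/L + 2) * (6 * S) = Csob * S := by rw [hCsobdef]; ring
    have h4 : Csob * S ≤ Csob * ε := mul_le_mul_of_nonneg_left hSε hCsob.le
    have h5 : Csob * ε ≤ Csob * (qm ^ 4 / (64 * Csob)) :=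
      mul_le_mul_of_nonneg_left hεc1 hCsob.le
    have h6 : Csob * (qm ^ 4 / (64 * Csob)) = qm ^ 4 / 64 := by
      field_simp
    have h7 : Q σ y ^ 2 ≤ (qm ^ 2 / 8) ^ 2 := by
      have : (qm ^ 2 / 8) ^ 2 = qm ^ 4 / 64 := by ring
      rw [this]; linarith [h3 ▸ h2]
    nlinarith [abs_nonneg (Q σ y), sq_abs (Q σ y), hqm]
  -- pointwise bound on the integrand of the numerator
  have hpt : ∀ σ ∈ Icc (0:ℝ) L, ∀ y : ℝ, 0 < y →
      |y * ((1 - ω * q_e σ / Real.sqrt (ω ^ 2 * (q_e σ) ^ 2 + Q σ y)) * dS 1 Q σ y)|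
        ≤ C1 * KK Q σ y := by
    intro σ hσ y hy
    have haq : qm ≤ q_e σ := hqmle σ hσ
    have hapos : 0 < ω * q_e σ := mul_pos (by linarith) (hqepos σ)
    have ha2 : qm / 2 ≤ ω * q_e σ := by
      have := mul_le_mul hω1 haq hqm.le (by linarith : (0:ℝ) ≤ ω)
      linarith
    have hrw : ω ^ 2 * (q_e σ) ^ 2 = (ω * q_e σ) ^ 2 := by ring
    rw [hrw]
    have hP := hsup σ hσ y hy
    have hsq : (qm / 2) ^ 2 ≤ (ω * q_e σ) ^ 2 := by
      apply pow_le_pow_left₀ (by positivity) ha2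
    have hP2 : |Q σ y| ≤ (ω * q_e σ) ^ 2 / 2 := by
      have h : (qm / 2) ^ 2 = qm ^ 2 / 4 := by ring
      rw [h] at hsq; linarith
    have hb := sqrt_bound hapos hP2
    have hb2 : |1 - ω * q_e σ / Real.sqrt ((ω * q_e σ) ^ 2 + Q σ y)| ≤ C1 * |Q σ y| := by
      refine hb.trans ?_
      have h1 : qm ^ 2 / 4 ≤ (ω * q_e σ) ^ 2 := by
        have h : (qm / 2) ^ 2 = qm ^ 2 / 4 := by ring
        rw [h] at hsq; linarith
      have h2 : 2 * |Q σ y| / (ω * q_e σ) ^ 2 ≤ 2 * |Q σ y| / (qm ^ 2 / 4) :=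
        div_le_div_of_nonneg_left (by positivity) (by positivity) h1
      refine h2.trans (le_of_eq ?_)
      rw [hC1def]; field_simp; ring
    set d : ℝ := dS 1 Q σ y with hd
    calc |y * ((1 - ω * q_e σ / Real.sqrt ((ω * q_e σ) ^ 2 + Q σ y)) * d)|
        = y * (|1 - ω * q_e σ / Real.sqrt ((ω * q_e σ) ^ 2 + Q σ y)| * |d|) := by
          rw [abs_mul, abs_mul, abs_of_pos hy]
      _ ≤ y * (C1 * |Q σ y| * |d|) := by
          apply mul_le_mul_of_nonneg_left _ hy.le
          exact mul_le_mul_of_nonneg_right hb2 (abs_nonneg _)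
      _ ≤ (1 + y) ^ 2 * (C1 * |Q σ y| * |d|) := by
          apply mul_le_mul_of_nonneg_right _ (by positivity)
          nlinarith only [hy.le, sq_nonneg y]
      _ ≤ (1 + y) ^ 2 * (C1 * ((Q σ y) ^ 2 + d ^ 2)) := by
          apply mul_le_mul_of_nonneg_left _ (sq_nonneg _)
          rw [mul_assoc]
          apply mul_le_mul_of_nonneg_left _ hC1.le
          have h1 := sq_nonneg (|Q σ y| - |d|)
          have h2 : |Q σ y| ^ 2 = (Q σ y) ^ 2 := sq_abs _
          have h3 : |d| ^ 2 = d ^ 2 := sq_abs _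
          have h4 : 0 ≤ |Q σ y| * |d| := mul_nonneg (abs_nonneg _) (abs_nonneg _)
          nlinarith only [h1, h2, h3, h4]
      _ = C1 * KK Q σ y := by unfold KK; ring
  -- the numerator
  set f : ℝ → ℝ → ℝ := fun σ t =>
    (1 - ω * q_e σ / Real.sqrt (ω ^ 2 * (q_e σ) ^ 2 + Q σ t)) * dS 1 Q σ t with hfdef
  have hprod2 : ((volume : Measure ℝ).restrict (Ioc (0:ℝ) L)).prod
        ((volume : Measure ℝ).restrict (Ioi (0:ℝ)))
      = (volume : Measure (ℝ × ℝ)).restrict (Ioc (0:ℝ) L ×ˢ Ioi (0:ℝ)) := by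
    rw [Measure.prod_restrict, ← Measure.volume_eq_prod]
  have hKprod : Integrable (fun p : ℝ × ℝ => KK Q p.1 p.2)
      (((volume : Measure ℝ).restrict (Ioc (0:ℝ) L)).prod
        ((volume : Measure ℝ).restrict (Ioi (0:ℝ)))) := by
    rw [hprod2]; exact hKD
  have hKswap : Integrable (fun p : ℝ × ℝ => KK Q p.2 p.1)
      (((volume : Measure ℝ).restrict (Ioi (0:ℝ))).prod
        ((volume : Measure ℝ).restrict (Ioc (0:ℝ) L))) := hKprod.swap
  have hJint : Integrable (fun y => ∫ σ in Ioc (0:ℝ) L, KK Q σ y)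
      ((volume : Measure ℝ).restrict (Ioi (0:ℝ))) := hKswap.integral_prod_left
  have hJval : (∫ y in Ioi (0:ℝ), ∫ σ in Ioc (0:ℝ) L, KK Q σ y)
      = ∫ p in Ioc (0:ℝ) L ×ˢ Ioi (0:ℝ), KK Q p.1 p.2 := by
    rw [MeasureTheory.integral_integral hKswap]
    have h2 := MeasureTheory.integral_prod_swap
      (μ := (volume : Measure ℝ).restrict (Ioc (0:ℝ) L))
      (ν := (volume : Measure ℝ).restrict (Ioi (0:ℝ)))
      (fun p : ℝ × ℝ => KK Q p.1 p.2)
    exact h2.trans (by rw [hprod2])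
  have hNabs : |∫ y in Ioi (0:ℝ), y * ∫ σ in (0:ℝ)..L, f σ y| ≤ C1 * (2 * S) := by
    have step1 : |∫ y in Ioi (0:ℝ), y * ∫ σ in (0:ℝ)..L, f σ y|
        ≤ ∫ y in Ioi (0:ℝ), |y * ∫ σ in (0:ℝ)..L, f σ y| := by
      simpa only [Real.norm_eq_abs] using norm_integral_le_integral_norm
        (μ := (volume : Measure ℝ).restrict (Ioi (0:ℝ)))
        (fun y => y * ∫ σ in (0:ℝ)..L, f σ y)
    have step2 : (∫ y in Ioi (0:ℝ), |y * ∫ σ in (0:ℝ)..L, f σ y|)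
        ≤ ∫ y in Ioi (0:ℝ), C1 * ∫ σ in Ioc (0:ℝ) L, KK Q σ y := by
      apply integral_mono_of_nonneg (Filter.Eventually.of_forall fun y => abs_nonneg _)
        (hJint.const_mul C1)
      refine (ae_restrict_iff' measurableSet_Ioi).2
        (Filter.Eventually.of_forall fun y hy => ?_)
      have hy' : 0 < y := hy
      have hcKy : Continuous fun σ => KK Q σ y := by
        have h1 : Continuous fun σ => Q σ y := (smooth2_left hQs y).continuous
        have h2 : Continuous fun σ => dS 1 Q σ y :=
          (smooth2_left (smooth2_dS1 hQs) y).continuous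
        exact continuous_const.mul ((h1.pow 2).add (h2.pow 2))
      calc |y * ∫ σ in (0:ℝ)..L, f σ y| = |∫ σ in (0:ℝ)..L, y * f σ y| := by
            rw [intervalIntegral.integral_const_mul]
        _ = |∫ σ in Ioc (0:ℝ) L, y * f σ y| := by
            rw [intervalIntegral.integral_of_le hL.le]
        _ ≤ ∫ σ in Ioc (0:ℝ) L, |y * f σ y| := by
            simpa only [Real.norm_eq_abs] using norm_integral_le_integral_norm
              (μ := (volume : Measure ℝ).restrict (Ioc (0:ℝ) L)) (fun σ => y * f σ y)
        _ ≤ ∫ σ in Ioc (0:ℝ) L, C1 * KK Q σ y := by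
            apply integral_mono_of_nonneg
              (Filter.Eventually.of_forall fun σ => abs_nonneg _)
              ((hcKy.integrableOn_Ioc).const_mul C1)
            refine (ae_restrict_iff' measurableSet_Ioc).2
              (Filter.Eventually.of_forall fun σ hσ => ?_)
            exact hpt σ ⟨hσ.1.le, hσ.2⟩ y hy'
        _ = C1 * ∫ σ in Ioc (0:ℝ) L, KK Q σ y := integral_const_mul C1 _
    have step3 : (∫ y in Ioi (0:ℝ), C1 * ∫ σ in Ioc (0:ℝ) L, KK Q σ y)
        = C1 * ∫ p in Ioc (0:ℝ) L ×ˢ Ioi (0:ℝ), KK Q p.1 p.2 := by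
      rw [integral_const_mul, hJval]
    have step4 : (∫ p in Ioc (0:ℝ) L ×ˢ Ioi (0:ℝ), KK Q p.1 p.2) ≤ 2 * S := by
      have heq : (fun p : ℝ × ℝ => KK Q p.1 p.2)
          = fun p : ℝ × ℝ => (wt 1 Q p.1 p.2) ^ 2 + (wt 1 (dS 1 Q) p.1 p.2) ^ 2 := by
        funext p; simp only [KK, wt, pow_one]; ring
      have hexp : (∫ p in Ioc (0:ℝ) L ×ˢ Ioi (0:ℝ), KK Q p.1 p.2)
          = L2sq L (wt 1 Q) + L2sq L (wt 1 (dS 1 Q)) := by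
        rw [heq]
        exact integral_add hfW1Q hfW1Qs
      rw [hexp]; linarith [e5, e6]
    calc |∫ y in Ioi (0:ℝ), y * ∫ σ in (0:ℝ)..L, f σ y|
        ≤ ∫ y in Ioi (0:ℝ), |y * ∫ σ in (0:ℝ)..L, f σ y| := step1
      _ ≤ ∫ y in Ioi (0:ℝ), C1 * ∫ σ in Ioc (0:ℝ) L, KK Q σ y := step2
      _ = C1 * ∫ p in Ioc (0:ℝ) L ×ˢ Ioi (0:ℝ), KK Q p.1 p.2 := step3
      _ ≤ C1 * (2 * S) := by
          apply mul_le_mul_of_nonneg_left _ hC1.le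
          linarith [step4]
  -- the denominator
  have hden : qm ^ 3 ≤ (1/L) * ∫ σ in (0:ℝ)..L, (q_e σ) ^ 3 := by
    have h1 : ∫ σ in (0:ℝ)..L, qm ^ 3 ≤ ∫ σ in (0:ℝ)..L, (q_e σ) ^ 3 :=
      intervalIntegral.integral_mono_on hL.le intervalIntegrable_const
        ((hqe.continuous.pow 3).intervalIntegrable _ _)
        (fun σ hσ => pow_le_pow_left₀ hqm.le (hqmle σ hσ) 3)
    rw [intervalIntegral.integral_const, smul_eq_mul] at h1
    calc qm ^ 3 = (1/L) * ((L - 0) * qm ^ 3) := by rw [sub_zero, ← mul_assoc, one_div_mul_cancel hL.ne', one_mul]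
      _ ≤ (1/L) * ∫ σ in (0:ℝ)..L, (q_e σ) ^ 3 :=
          mul_le_mul_of_nonneg_left h1 h1L.le
  have hdpos : 0 < (1/L) * ∫ σ in (0:ℝ)..L, (q_e σ) ^ 3 :=
    lt_of_lt_of_le (by positivity) hden
  -- final assembly
  have hωpos : 0 < ω := by linarith
  have hωε : 0 < ω * ε := mul_pos hωpos hε
  rw [abs_mul, abs_of_pos (by positivity : (0:ℝ) < 1 / (ω * ε)), abs_div,
    abs_of_pos hdpos]
  have hεne : ε ≠ 0 := ne_of_gt hε
  have hqmne : qm ≠ 0 := ne_of_gt hqm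
  have hNle : |∫ y in Ioi (0:ℝ), y * ∫ σ in (0:ℝ)..L, f σ y| ≤ 2 * C1 * ε ^ (1.98:ℝ) := by
    refine hNabs.trans ?_
    have := mul_le_mul_of_nonneg_left hS198 (by linarith : (0:ℝ) ≤ 2 * C1)
    linarith
  have h098 : ε ^ (1.98:ℝ) / ε = ε ^ (0.98:ℝ) := by
    have h := Real.rpow_sub hε 1.98 1
    rw [Real.rpow_one] at h
    rw [show (1.98:ℝ) - 1 = 0.98 by norm_num] at h
    exact h.symm
  calc 1 / (ω * ε) * (|∫ y in Ioi (0:ℝ), y * ∫ σ in (0:ℝ)..L, f σ y|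
          / ((1/L) * ∫ σ in (0:ℝ)..L, (q_e σ) ^ 3))
      ≤ 1 / (ω * ε) * (|∫ y in Ioi (0:ℝ), y * ∫ σ in (0:ℝ)..L, f σ y| / qm ^ 3) := by
        apply mul_le_mul_of_nonneg_left _ (by positivity)
        exact div_le_div_of_nonneg_left (abs_nonneg _) (pow_pos hqm 3) hden
    _ ≤ (2 / ε) * ((2 * C1 * ε ^ (1.98:ℝ)) / qm ^ 3) := by
        apply mul_le_mul
        · rw [div_le_div_iff₀ hωε hε]
          have h0 : 0 ≤ ε * (2 * ω - 1) := mul_nonneg hε.le (by linarith)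
          linarith
        · exact (div_le_div_iff_of_pos_right (pow_pos hqm 3)).2 hNle
        · exact div_nonneg (abs_nonneg _) (pow_pos hqm 3).le
        · exact div_nonneg (by norm_num) hε.le
    _ = C2 * (ε ^ (1.98:ℝ) / ε) := by
        rw [hC2def, hC1def]; field_simp; ring
    _ = C2 * ε ^ (0.98:ℝ) := by rw [h098]
    _ ≤ ε ^ (0.97:ℝ) := by
        have hsplit : ε ^ (0.98:ℝ) = ε ^ (0.01:ℝ) * ε ^ (0.97:ℝ) := by
          rw [← Real.rpow_add hε]; norm_num
        have hC2' : (0:ℝ) < 1 + C2 := by linarith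
        have h001 : ε ^ (0.01:ℝ) ≤ 1 / (1 + C2) := by
          have h1 : ε ^ (0.01:ℝ) ≤ ((1/(1+C2)) ^ (100:ℕ)) ^ (0.01:ℝ) :=
            Real.rpow_le_rpow hε.le hεc2 (by norm_num)
          have h2 : ((1/(1+C2)) ^ (100:ℕ)) ^ (0.01:ℝ) = 1/(1+C2) := by
            rw [← Real.rpow_natCast (1/(1+C2)) 100, ← Real.rpow_mul (by positivity)]
            norm_num
          rwa [h2] at h1
        have hkey : C2 * ε ^ (0.01:ℝ) ≤ 1 := by
          have hmul := mul_le_mul_of_nonneg_left h001 hC2.le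
          have h3 : C2 * (1/(1+C2)) ≤ 1 := by
            rw [mul_one_div, div_le_one hC2']; linarith
          linarith
        have hpos97 : 0 ≤ ε ^ (0.97:ℝ) := Real.rpow_nonneg hε.le _
        calc C2 * ε ^ (0.98:ℝ) = (C2 * ε ^ (0.01:ℝ)) * ε ^ (0.97:ℝ) := by
              rw [hsplit]; ring
          _ ≤ 1 * ε ^ (0.97:ℝ) := mul_le_mul_of_nonneg_right hkey hpos97
          _ = ε ^ (0.97:ℝ) := one_mul _

end Main
end
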